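/- arXiv:2011.14730 — 4 statements merged into one kernel-verified Lean document; each statement's English description precedes it below -/
import Mathlib

section
/- Let G be a finite simple graph, t ∈ ℕ, χ³ a 3-stable coloring of V(G)³, and define the pair-coloring χ(v,w) := χ³(v,w,w). Then χ is 2-stable (in the directed sense) on the t-closure graph H of (G,χ). -/
open SimpleGraph

/-- The interior (set of internal vertices) of a walk: its support minus the two endpoints. -/
def walkInterior {V : Type*} {G : SimpleGraph V} {x y : V} (p : G.Walk x y) : Set V :=
  {z | z ∈ p.support ∧ z ≠ x ∧ z ≠ y}

/-- `H` is (isomorphic to) a topological subgraph of `G`: there is an injective map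
`φ : V(H) → V(G)` together with, for every edge `xy` of `H`, a path in `G` from `φ x`
to `φ y` of length at least 1, such that these paths are pairwise internally
vertex-disjoint and no internal vertex of any of them lies in the image of `φ`. -/
def IsTopSubgraph {W : Type*} {V : Type*} (H : SimpleGraph W) (G : SimpleGraph V) : Prop :=
  ∃ φ : W → V, Function.Injective φ ∧
    ∃ P : ∀ x y : W, H.Adj x y → G.Walk (φ x) (φ y),
      (∀ x y (hxy : H.Adj x y), (P x y hxy).IsPath ∧ 0 < (P x y hxy).length) ∧
      (∀ x y (hxy : H.Adj x y), P y x hxy.symm = (P x y hxy).reverse) ∧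
      (∀ x y (hxy : H.Adj x y), Disjoint (walkInterior (P x y hxy)) (Set.range φ)) ∧
      (∀ x y (hxy : H.Adj x y), ∀ x' y' (hxy' : H.Adj x' y'), s(x, y) ≠ s(x', y') →
        Disjoint (walkInterior (P x y hxy)) (walkInterior (P x' y' hxy')))

/-- `G` contains the complete graph on `h` vertices as a topological subgraph. -/
def HasTopK {V : Type*} (G : SimpleGraph V) (h : ℕ) : Prop :=
  IsTopSubgraph (⊤ : SimpleGraph (Fin h)) G

/-- `a` is a constant witnessing the Bollobás–Thomason / Komlós–Szemerédi degree bound: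
for every `h ≥ 1`, every finite simple graph excluding `K_h` as a topological subgraph
has degree sum at most `a·h²·n`. -/
def DegSumConst (a : ℝ) : Prop :=
  ∀ (n h : ℕ) (G : SimpleGraph (Fin n)), 1 ≤ h → ¬ HasTopK G h →
    ∑ v : Fin n, (({u | G.Adj v u}.ncard : ℝ)) ≤ a * (h : ℝ) ^ 2 * (n : ℝ)

/-- One refinement round of Color Refinement on the complete graph on `V`, where the
current vertex partition is `r` and the arc color of `(v,w)` is the pair
`(G.Adj v w, χ v w)` (multiset equality is expressed by equality of all counts). -/
def crStep {V C : Type*} (G : SimpleGraph V) (χ : V → V → C) (r : V → V → Prop) :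
    V → V → Prop := fun x y =>
  r x y ∧ ∀ (z : V) (c₁ c₂ : C),
    ({u | u ≠ x ∧ r u z ∧ χ x u = c₁ ∧ χ u x = c₂ ∧ G.Adj x u}.ncard =
      {u | u ≠ y ∧ r u z ∧ χ y u = c₁ ∧ χ u y = c₂ ∧ G.Adj y u}.ncard) ∧
    ({u | u ≠ x ∧ r u z ∧ χ x u = c₁ ∧ χ u x = c₂ ∧ ¬ G.Adj x u}.ncard =
      {u | u ≠ y ∧ r u z ∧ χ y u = c₁ ∧ χ u y = c₂ ∧ ¬ G.Adj y u}.ncard)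

/-- The Color Refinement stabilization of the partition `r` (iterating the refinement
round enough times to reach the stable partition). -/
def crStable {V C : Type*} [Fintype V] (G : SimpleGraph V) (χ : V → V → C)
    (r : V → V → Prop) : V → V → Prop :=
  (crStep G χ)^[Fintype.card V + 1] r

/-- Split all color classes of size at most `t` into singletons. -/
def splitSmall {V : Type*} (t : ℕ) (r : V → V → Prop) : V → V → Prop := fun x y =>
  r x y ∧ ({u | r u x}.ncard ≤ t → x = y)

/-- The `t`-CR-stable partition obtained from the initial partition `r`: alternately
apply Color Refinement and split the classes of size at most `t`, until stable. -/
def tCRStable {V C : Type*} [Fintype V] (G : SimpleGraph V) (χ : V → V → C) (t : ℕ)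
    (r : V → V → Prop) : V → V → Prop :=
  (fun s => splitSmall t (crStable G χ s))^[Fintype.card V + 1] r

/-- The partition obtained from the vertex coloring `v ↦ χ v v` by individualizing
every vertex of `X`. -/
def indivRel {V C : Type*} (χ : V → V → C) (X : Set V) : V → V → Prop := fun x y =>
  χ x x = χ y y ∧ (x ∈ X ↔ y ∈ X) ∧ (x ∈ X → x = y)

/-- The `t`-closure `cl_t^{(G,χ)}(X)`: the set of vertices whose color class in the
`t`-CR-stable coloring (after individualizing `X`) is a singleton. -/
def clSet {V C : Type*} [Fintype V] (G : SimpleGraph V) (χ : V → V → C) (t : ℕ)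
    (X : Set V) : Set V :=
  {v | {u | tCRStable G χ t (indivRel χ X) u v}.ncard = 1}

/-- The arc relation of the `t`-closure graph of `(G,χ)`. -/
def clArc {V C : Type*} [Fintype V] (G : SimpleGraph V) (χ : V → V → C) (t : ℕ) :
    V → V → Prop := fun v w => v ≠ w ∧ w ∈ clSet G χ t {v}

/-- A vertex is maximal if it lies in a strongly connected component of the
`t`-closure graph without outgoing arcs. -/
def MaximalVtx {V C : Type*} [Fintype V] (G : SimpleGraph V) (χ : V → V → C) (t : ℕ)
    (v : V) : Prop :=
  ∀ u, clArc G χ t v u → clArc G χ t u v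

/-- A vertex coloring is `1`-stable. -/
def IsOneStable {V C : Type*} (G : SimpleGraph V) (lam : V → C) : Prop :=
  ∀ v w, lam v = lam w → ∀ c,
    {u | G.Adj v u ∧ lam u = c}.ncard = {u | G.Adj w u ∧ lam u = c}.ncard

/-- A pair coloring is `2`-stable on the simple graph `G`. -/
def IsTwoStable {V C : Type*} (G : SimpleGraph V) (χ : V → V → C) : Prop :=
  ∀ v w v' w', χ v w = χ v' w' →
    ((v = w ↔ v' = w') ∧ (G.Adj v w ↔ G.Adj v' w') ∧ χ v v = χ v' v' ∧ χ w w = χ w' w') ∧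
    ∀ c₁ c₂, {u | χ v u = c₁ ∧ χ u w = c₂}.ncard = {u | χ v' u = c₁ ∧ χ u w' = c₂}.ncard

/-- A pair coloring is `2`-stable on the directed graph with arc relation `E`. -/
def IsTwoStableDigraph {V C : Type*} (E : V → V → Prop) (χ : V → V → C) : Prop :=
  ∀ v w v' w', χ v w = χ v' w' →
    ((v = w ↔ v' = w') ∧ (E v w ↔ E v' w') ∧ (E w v ↔ E w' v') ∧
      χ v v = χ v' v' ∧ χ w w = χ w' w') ∧
    ∀ c₁ c₂, {u | χ v u = c₁ ∧ χ u w = c₂}.ncard = {u | χ v' u = c₁ ∧ χ u w' = c₂}.ncard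

/-- A coloring of triples is `3`-stable on the simple graph `G`. -/
def IsThreeStable {V C : Type*} (G : SimpleGraph V) (χ₃ : V → V → V → C) : Prop :=
  ∀ v₁ v₂ v₃ w₁ w₂ w₃, χ₃ v₁ v₂ v₃ = χ₃ w₁ w₂ w₃ →
    ((v₁ = v₂ ↔ w₁ = w₂) ∧ (v₁ = v₃ ↔ w₁ = w₃) ∧ (v₂ = v₃ ↔ w₂ = w₃) ∧
      (G.Adj v₁ v₂ ↔ G.Adj w₁ w₂) ∧ (G.Adj v₁ v₃ ↔ G.Adj w₁ w₃) ∧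
      (G.Adj v₂ v₃ ↔ G.Adj w₂ w₃)) ∧
    ∀ c₁ c₂ c₃,
      {u | χ₃ u v₂ v₃ = c₁ ∧ χ₃ v₁ u v₃ = c₂ ∧ χ₃ v₁ v₂ u = c₃}.ncard =
        {u | χ₃ u w₂ w₃ = c₁ ∧ χ₃ w₁ u w₃ = c₂ ∧ χ₃ w₁ w₂ u = c₃}.ncard

/-- Reachability in `G` by a walk avoiding the set `S`. -/
def ReachOutside {V : Type*} (G : SimpleGraph V) (S : Set V) (x y : V) : Prop :=
  ∃ p : G.Walk x y, ∀ z ∈ p.support, z ∉ S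

/-- `Z` is the vertex set of a connected component of the induced subgraph `G − S`. -/
def IsCompOutside {V : Type*} (G : SimpleGraph V) (S Z : Set V) : Prop :=
  ∃ x₀, x₀ ∉ S ∧ Z = {y | ReachOutside G S x₀ y}

/-- The neighborhood `N_G(S)` of a set `S`: all vertices outside `S` with a neighbor in `S`. -/
def nbhdOf {V : Type*} (G : SimpleGraph V) (S : Set V) : Set V :=
  {v | v ∉ S ∧ ∃ u ∈ S, G.Adj v u}

/-- A partition of the vertex set (given as an equivalence relation `r`) is
`λ`-definable: for some set `Cs` of colors attained on off-diagonal pairs, the classes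
of `r` are exactly the connected components of the graph with edges
`{v,w}` (`v ≠ w`) such that `λ(v,w) ∈ Cs`. -/
def LamDefinable {V C : Type*} (lam : V → V → C) (r : V → V → Prop) : Prop :=
  ∃ Cs : Set C, (∀ c ∈ Cs, ∃ v w : V, v ≠ w ∧ lam v w = c) ∧
    ∀ x y, r x y ↔ (SimpleGraph.fromRel (fun v w => lam v w ∈ Cs)).Reachable x y

/-!
Fix `v` and let `r v` be the partition computed by the `t`-CR procedure after individualizing `v`.
By induction along the procedure, whether `r v a b` holds depends only on the color `χ₃ v a b`.
The engine is the counting part of 3-stability: for `χ₃ v a b = χ₃ v' a' b'` there is a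
bijection `u ↦ u'` with `χ₃ v u b = χ₃ v' u' b'` and `χ₃ v a u = χ₃ v' a' u'`, so the neighbour
counts compared by Color Refinement and the class sizes used for splitting agree for triples of
equal color. Hence whether `w ∈ cl_t(v)` depends only on `χ₃ v w w`. The remaining conditions of
2-stability hold because the color of a triple determines the colors of the triples obtained by
repeating its entries.
-/

theorem exists_equiv_comp_eq_of_ncard_fiber_eq {α β : Type*} [Finite α] {f g : α → β}
    (h : ∀ y, {x | f x = y}.ncard = {x | g x = y}.ncard) :
    ∃ σ : α ≃ α, ∀ x, f x = g (σ x) := by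
  let e y : {x // f x = y} ≃ {x // g x = y} := (Finite.card_eq.mp (h y)).some
  exact ⟨Equiv.ofFiberEquiv e, fun x => (Equiv.ofFiberEquiv_map e x).symm⟩

section ThreeStable

variable {V C : Type*} {G : SimpleGraph V} {χ₃ : V → V → V → C} {a b c a' b' c' : V}

namespace IsThreeStable

theorem eq_iff₁₂ (hst : IsThreeStable G χ₃) (h : χ₃ a b c = χ₃ a' b' c') : a = b ↔ a' = b' :=
  (hst _ _ _ _ _ _ h).1.1

theorem eq_iff₁₃ (hst : IsThreeStable G χ₃) (h : χ₃ a b c = χ₃ a' b' c') : a = c ↔ a' = c' :=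
  (hst _ _ _ _ _ _ h).1.2.1

theorem eq_iff₂₃ (hst : IsThreeStable G χ₃) (h : χ₃ a b c = χ₃ a' b' c') : b = c ↔ b' = c' :=
  (hst _ _ _ _ _ _ h).1.2.2.1

theorem adj_iff₂₃ (hst : IsThreeStable G χ₃) (h : χ₃ a b c = χ₃ a' b' c') :
    G.Adj b c ↔ G.Adj b' c' :=
  (hst _ _ _ _ _ _ h).1.2.2.2.2.2

theorem exists_equiv [Finite V] (hst : IsThreeStable G χ₃) (h : χ₃ a b c = χ₃ a' b' c') :
    ∃ σ : V ≃ V, ∀ u, χ₃ u b c = χ₃ (σ u) b' c' ∧ χ₃ a u c = χ₃ a' (σ u) c' ∧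
      χ₃ a b u = χ₃ a' b' (σ u) := by
  obtain ⟨σ, hσ⟩ := exists_equiv_comp_eq_of_ncard_fiber_eq
    (f := fun u => (χ₃ u b c, χ₃ a u c, χ₃ a b u))
    (g := fun u => (χ₃ u b' c', χ₃ a' u c', χ₃ a' b' u)) fun ⟨c₁, c₂, c₃⟩ => by
      simpa only [Prod.mk.injEq] using (hst _ _ _ _ _ _ h).2 c₁ c₂ c₃
  exact ⟨σ, fun u => by simpa only [Prod.mk.injEq] using hσ u⟩

theorem ncard_setOf_eq [Finite V] (hst : IsThreeStable G χ₃) (h : χ₃ a b c = χ₃ a' b' c')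
    {p q : V → Prop}
    (hpq : ∀ u u', χ₃ a u c = χ₃ a' u' c' → χ₃ a b u = χ₃ a' b' u' → (p u ↔ q u')) :
    {u | p u}.ncard = {u | q u}.ncard := by
  obtain ⟨σ, hσ⟩ := hst.exists_equiv h
  exact Nat.card_congr (σ.subtypeEquiv fun u => hpq u (σ u) (hσ u).2.1 (hσ u).2.2)

theorem color_aac_aba [Finite V] (hst : IsThreeStable G χ₃) (h : χ₃ a b c = χ₃ a' b' c') :
    χ₃ a a c = χ₃ a' a' c' ∧ χ₃ a b a = χ₃ a' b' a' := by
  obtain ⟨σ, hσ⟩ := hst.exists_equiv h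
  obtain ⟨-, h₂, h₃⟩ := hσ a
  obtain rfl : a' = σ a := (hst.eq_iff₁₂ h₂).1 rfl
  exact ⟨h₂, h₃⟩

theorem color_bbc_abb [Finite V] (hst : IsThreeStable G χ₃) (h : χ₃ a b c = χ₃ a' b' c') :
    χ₃ b b c = χ₃ b' b' c' ∧ χ₃ a b b = χ₃ a' b' b' := by
  obtain ⟨σ, hσ⟩ := hst.exists_equiv h
  obtain ⟨h₁, -, h₃⟩ := hσ b
  obtain rfl : σ b = b' := (hst.eq_iff₁₂ h₁).1 rfl
  exact ⟨h₁, h₃⟩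

theorem color_acc [Finite V] (hst : IsThreeStable G χ₃) (h : χ₃ a b c = χ₃ a' b' c') :
    χ₃ a c c = χ₃ a' c' c' := by
  obtain ⟨σ, hσ⟩ := hst.exists_equiv h
  obtain ⟨-, h₂, -⟩ := hσ c
  obtain rfl : σ c = c' := (hst.eq_iff₂₃ h₂).1 rfl
  exact h₂

theorem color_aaa [Finite V] (hst : IsThreeStable G χ₃) (h : χ₃ a b c = χ₃ a' b' c') :
    χ₃ a a a = χ₃ a' a' a' :=
  (hst.color_aac_aba (hst.color_aac_aba h).1).2

theorem color_bbb [Finite V] (hst : IsThreeStable G χ₃) (h : χ₃ a b c = χ₃ a' b' c') :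
    χ₃ b b b = χ₃ b' b' b' :=
  (hst.color_aac_aba (hst.color_bbc_abb h).1).2

theorem color_bcc [Finite V] (hst : IsThreeStable G χ₃) (h : χ₃ a b c = χ₃ a' b' c') :
    χ₃ b c c = χ₃ b' c' c' :=
  hst.color_acc (hst.color_bbc_abb h).1

theorem color_ccc [Finite V] (hst : IsThreeStable G χ₃) (h : χ₃ a b c = χ₃ a' b' c') :
    χ₃ c c c = χ₃ c' c' c' :=
  (hst.color_bbc_abb (hst.color_acc h)).1

theorem color_swap [Finite V] (hst : IsThreeStable G χ₃) (h : χ₃ a b b = χ₃ a' b' b') :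
    χ₃ b a a = χ₃ b' a' a' :=
  hst.color_bcc (hst.color_aac_aba h).2

theorem color_cbb [Finite V] (hst : IsThreeStable G χ₃) (h : χ₃ a b c = χ₃ a' b' c') :
    χ₃ c b b = χ₃ c' b' b' :=
  hst.color_swap (hst.color_bcc h)

end IsThreeStable

/-- `r v` stands for the partition obtained after individualizing `v`. Both orders of the pair
are required because `χ₃` need not be symmetric in its last two arguments. -/
def ColorInvariantFamily (χ₃ : V → V → V → C) (r : V → V → V → Prop) : Prop :=
  (∀ ⦃v a b v' a' b'⦄, χ₃ v a b = χ₃ v' a' b' → (r v a b ↔ r v' a' b')) ∧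
    ∀ ⦃v a b v' a' b'⦄, χ₃ v a b = χ₃ v' a' b' → (r v b a ↔ r v' b' a')

noncomputable def nbrCount (G : SimpleGraph V) (χ₃ : V → V → V → C) (f : Prop → Prop)
    (r : V → V → Prop) (x z : V) (c₁ c₂ : C) : ℕ :=
  {u | u ≠ x ∧ r u z ∧ χ₃ x u u = c₁ ∧ χ₃ u x x = c₂ ∧ f (G.Adj x u)}.ncard

theorem crStep_iff_nbrCount {r : V → V → Prop} {x y : V} :
    crStep G (fun x y => χ₃ x y y) r x y ↔ r x y ∧ ∀ z c₁ c₂,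
      nbrCount G χ₃ id r x z c₁ c₂ = nbrCount G χ₃ id r y z c₁ c₂ ∧
        nbrCount G χ₃ Not r x z c₁ c₂ = nbrCount G χ₃ Not r y z c₁ c₂ :=
  Iff.rfl

namespace ColorInvariantFamily

variable {r : V → V → V → Prop} {v x z v' x' z' : V}

theorem ncard_class_eq [Finite V] (hst : IsThreeStable G χ₃) (hr : ColorInvariantFamily χ₃ r)
    (h : χ₃ v x x = χ₃ v' x' x') : {u | r v u x}.ncard = {u | r v' u x'}.ncard :=
  hst.ncard_setOf_eq h fun _ _ h₂ _ => hr.1 h₂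

theorem nbrCount_eq_of_color_eq [Finite V] (hst : IsThreeStable G χ₃)
    (hr : ColorInvariantFamily χ₃ r) (h : χ₃ v x z = χ₃ v' x' z') (f : Prop → Prop) (c₁ c₂ : C) :
    nbrCount G χ₃ f (r v) x z c₁ c₂ = nbrCount G χ₃ f (r v') x' z' c₁ c₂ :=
  hst.ncard_setOf_eq h fun u u' h₂ h₃ =>
    and_congr (not_congr <| eq_comm.trans <| (hst.eq_iff₂₃ h₃).trans eq_comm) <|
      and_congr (hr.1 h₂) <| and_congr (by rw [hst.color_bcc h₃]) <|
        and_congr (by rw [hst.color_cbb h₃]) (by rw [hst.adj_iff₂₃ h₃])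

theorem nbrCount_eq_of_color_eq_swap [Finite V] (hst : IsThreeStable G χ₃)
    (hr : ColorInvariantFamily χ₃ r) (h : χ₃ v z x = χ₃ v' z' x') (f : Prop → Prop) (c₁ c₂ : C) :
    nbrCount G χ₃ f (r v) x z c₁ c₂ = nbrCount G χ₃ f (r v') x' z' c₁ c₂ :=
  hst.ncard_setOf_eq h fun u u' h₂ h₃ =>
    and_congr (not_congr (hst.eq_iff₂₃ h₂)) <|
      and_congr (hr.2 h₃) <| and_congr (by rw [hst.color_cbb h₂]) <|
        and_congr (by rw [hst.color_bcc h₂])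
          (by rw [G.adj_comm x, G.adj_comm x', hst.adj_iff₂₃ h₂])

theorem crStep [Finite V] (hst : IsThreeStable G χ₃) (hr : ColorInvariantFamily χ₃ r) :
    ColorInvariantFamily χ₃ fun v => _root_.crStep G (fun x y => χ₃ x y y) (r v) := by
  suffices H : ∀ ⦃v a b v' a' b'⦄, χ₃ v a b = χ₃ v' a' b' →
      (_root_.crStep G (fun x y => χ₃ x y y) (r v) a b →
        _root_.crStep G (fun x y => χ₃ x y y) (r v') a' b') ∧
      (_root_.crStep G (fun x y => χ₃ x y y) (r v) b a →
        _root_.crStep G (fun x y => χ₃ x y y) (r v') b' a') from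
    ⟨fun _ _ _ _ _ _ h => ⟨(H h).1, (H h.symm).1⟩, fun _ _ _ _ _ _ h => ⟨(H h).2, (H h.symm).2⟩⟩
  intro v a b v' a' b' h
  -- every `z'` has a partner `z` with `χ₃ v a z = χ₃ v' a' z'` and `χ₃ v z b = χ₃ v' z' b'`
  have hpartner : ∀ z', ∃ z, ∀ f c₁ c₂,
      nbrCount G χ₃ f (r v) a z c₁ c₂ = nbrCount G χ₃ f (r v') a' z' c₁ c₂ ∧
        nbrCount G χ₃ f (r v) b z c₁ c₂ = nbrCount G χ₃ f (r v') b' z' c₁ c₂ := by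
    intro z'
    obtain ⟨σ, hσ⟩ := hst.exists_equiv h.symm
    obtain ⟨-, hz₂, hz₃⟩ := hσ z'
    exact ⟨σ z', fun f c₁ c₂ => ⟨hr.nbrCount_eq_of_color_eq hst hz₃.symm f c₁ c₂,
      hr.nbrCount_eq_of_color_eq_swap hst hz₂.symm f c₁ c₂⟩⟩
  simp only [crStep_iff_nbrCount]
  refine ⟨fun ⟨hab, hcount⟩ => ⟨(hr.1 h).1 hab, fun z' c₁ c₂ => ?_⟩,
    fun ⟨hba, hcount⟩ => ⟨(hr.2 h).1 hba, fun z' c₁ c₂ => ?_⟩⟩ <;>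
  · obtain ⟨z, hz⟩ := hpartner z'
    rw [← (hz id c₁ c₂).1, ← (hz id c₁ c₂).2, ← (hz Not c₁ c₂).1, ← (hz Not c₁ c₂).2]
    exact hcount z c₁ c₂

theorem splitSmall [Finite V] (hst : IsThreeStable G χ₃) (hr : ColorInvariantFamily χ₃ r)
    (t : ℕ) : ColorInvariantFamily χ₃ fun v => splitSmall t (r v) := by
  refine ⟨fun v a b v' a' b' h => ?_, fun v a b v' a' b' h => ?_⟩
  · simp only [_root_.splitSmall, hr.1 h, hr.ncard_class_eq hst (hst.color_bbc_abb h).2,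
      hst.eq_iff₂₃ h]
  · simp only [_root_.splitSmall, hr.2 h, hr.ncard_class_eq hst (hst.color_acc h),
      eq_comm (a := b), eq_comm (a := b'), hst.eq_iff₂₃ h]

theorem iterate {f : (V → V → Prop) → V → V → Prop}
    (hf : ∀ r, ColorInvariantFamily χ₃ r → ColorInvariantFamily χ₃ fun v => f (r v))
    (hr : ColorInvariantFamily χ₃ r) (n : ℕ) :
    ColorInvariantFamily χ₃ fun v => f^[n] (r v) := by
  induction n with
  | zero => exact hr
  | succ n ih => simpa only [Function.iterate_succ_apply'] using hf _ ih

end ColorInvariantFamily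

theorem colorInvariantFamily_indivRel [Finite V] (hst : IsThreeStable G χ₃) :
    ColorInvariantFamily χ₃ fun v => indivRel (fun x y => χ₃ x y y) {v} := by
  refine ⟨fun v a b v' a' b' h => ?_, fun v a b v' a' b' h => ?_⟩ <;>
  simp only [indivRel, Set.mem_singleton_iff, hst.color_bbb h, hst.color_ccc h,
    eq_comm (b := v), eq_comm (b := v'), hst.eq_iff₁₂ h, hst.eq_iff₁₃ h, eq_comm (a := b),
    eq_comm (a := b'), hst.eq_iff₂₃ h]

theorem colorInvariantFamily_tCRStable [Fintype V] (hst : IsThreeStable G χ₃) (t : ℕ) :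
    ColorInvariantFamily χ₃ fun v =>
      tCRStable G (fun x y => χ₃ x y y) t (indivRel (fun x y => χ₃ x y y) {v}) :=
  ColorInvariantFamily.iterate
    (fun _ hr => ((hr.iterate (fun _ hr' => hr'.crStep hst) _).splitSmall hst t))
    (colorInvariantFamily_indivRel hst) _

theorem IsThreeStable.mem_clSet_iff [Fintype V] (hst : IsThreeStable G χ₃) (t : ℕ)
    {v w v' w' : V} (h : χ₃ v w w = χ₃ v' w' w') :
    w ∈ clSet G (fun x y => χ₃ x y y) t {v} ↔ w' ∈ clSet G (fun x y => χ₃ x y y) t {v'} := by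
  simp only [clSet, Set.mem_ofPred_eq,
    (colorInvariantFamily_tCRStable hst t).ncard_class_eq hst h]

end ThreeStable

/-- Let `G` be a finite simple graph, `t ∈ ℕ`, `χ₃` a 3-stable coloring of
`V(G)³`, and define the pair-coloring `χ(v,w) := χ₃(v,w,w)`. Then `χ` is 2-stable (in the
directed sense) on the `t`-closure graph `H` of `(G,χ)`. -/
theorem stmt_1 {V C₃ : Type*} [Fintype V]
    (G : SimpleGraph V) (t : ℕ)
    (χ₃ : V → V → V → C₃) (hstable : IsThreeStable G χ₃) :
    IsTwoStableDigraph (clArc G (fun x y => χ₃ x y y) t) (fun x y => χ₃ x y y) := by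
  intro v w v' w' (h : χ₃ v w w = χ₃ v' w' w')
  have hwv : χ₃ w v v = χ₃ w' v' v' := hstable.color_swap h
  refine ⟨⟨hstable.eq_iff₁₂ h, ?_, ?_, hstable.color_aaa h, hstable.color_bbb h⟩, fun c₁ c₂ => ?_⟩
  · exact and_congr (not_congr (hstable.eq_iff₁₂ h)) (hstable.mem_clSet_iff t h)
  · exact and_congr (not_congr (hstable.eq_iff₁₂ hwv)) (hstable.mem_clSet_iff t hwv)
  · exact hstable.ncard_setOf_eq h fun u u' h₂ _ => by
      dsimp only
      rw [(hstable.color_bbc_abb h₂).2, hstable.color_bcc h₂]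
end

section
/- Let G be a finite simple graph with a pair-coloring χ and let t ∈ ℕ. For all u,v ∈ V(G): if v ∈ cl_t^{(G,χ)}(u), then cl_t^{(G,χ)}(v) ⊆ cl_t^{(G,χ)}(u). In particular, if (u,v) and (v,w) are arcs of the t-closure graph of (G,χ) and u ≠ w, then (u,w) is an arc of the t-closure graph. -/
open SimpleGraph

/-!
The `t`-CR-stable partition `ρ_X` obtained after individualizing `X` is a fixed point of one
round `F` (Color Refinement followed by splitting the small classes): `F` only refines
equivalences, and the number of classes, which is at most `|V|`, grows with every proper
refinement. `F` is also monotone, since a neighbour count into a class of a coarser partition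
is the sum of the counts into the finer classes it contains. Now if `Y ⊆ cl_t(X)`, every vertex
of `Y` forms a singleton class of `ρ_X`, so `ρ_X` refines the partition with `Y`
individualized, and iterating `F` gives `ρ_X = Fⁿ ρ_X ≤ Fⁿ (indiv Y) = ρ_Y`. Hence every
singleton class of `ρ_Y` is one of `ρ_X`, i.e. `cl_t(Y) ⊆ cl_t(X)`.
-/

section Refinement

variable {V : Type*}

structure IsRefinementOperator (f : (V → V → Prop) → V → V → Prop) : Prop where
  equivalence {r : V → V → Prop} : Equivalence r → Equivalence (f r)
  le {r : V → V → Prop} : Equivalence r → f r ≤ r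
  mono {r s : V → V → Prop} : Equivalence r → Equivalence s → r ≤ s → f r ≤ f s

namespace IsRefinementOperator

variable {f g : (V → V → Prop) → V → V → Prop}

theorem comp (hf : IsRefinementOperator f) (hg : IsRefinementOperator g) :
    IsRefinementOperator (fun r => f (g r)) where
  equivalence hr := hf.equivalence (hg.equivalence hr)
  le hr := (hf.le (hg.equivalence hr)).trans (hg.le hr)
  mono hr hs hrs := hf.mono (hg.equivalence hr) (hg.equivalence hs) (hg.mono hr hs hrs)

theorem iterate (hf : IsRefinementOperator f) (n : ℕ) : IsRefinementOperator f^[n] := by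
  induction n with
  | zero => exact ⟨id, fun _ => le_rfl, fun _ _ => id⟩
  | succ n ih => rw [Function.iterate_succ']; exact hf.comp ih

end IsRefinementOperator

theorem Function.isFixedPt_iterate_of_lt_of_le {α : Type*} {f : α → α} {x : α} (μ : α → ℕ)
    {N : ℕ} (hle : ∀ n, μ (f^[n] x) ≤ N)
    (hlt : ∀ n, ¬ Function.IsFixedPt f (f^[n] x) → μ (f^[n] x) < μ (f (f^[n] x))) :
    Function.IsFixedPt f (f^[N] x) := by
  obtain ⟨k, hkN, hk⟩ : ∃ k ≤ N, Function.IsFixedPt f (f^[k] x) := by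
    by_contra! hnot
    have hgrow : ∀ k ≤ N + 1, k ≤ μ (f^[k] x) := by
      intro k
      induction k with
      | zero => simp
      | succ k ih =>
        intro hk
        have := hlt k (hnot k (by omega))
        rw [Function.iterate_succ_apply']
        have := ih (by omega)
        omega
    have := hgrow (N + 1) le_rfl
    have := hle (N + 1)
    omega
  rw [show N = (N - k) + k by omega, Function.iterate_add_apply, Function.iterate_fixed hk]
  exact hk

theorem card_quot_lt_card_quot [Finite V] {r s : V → V → Prop} (hs : Equivalence s)
    (hsr : s ≤ r) (hne : s ≠ r) : Nat.card (Quot r) < Nat.card (Quot s) := by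
  have : Finite (Quot s) := Finite.of_surjective _ Quot.mk_surjective
  obtain ⟨x, y, hrxy, hsxy⟩ : ∃ x y, r x y ∧ ¬ s x y := by
    by_contra! h
    exact hne (le_antisymm hsr fun x y hxy => h x y hxy)
  let coarsen : Quot s → Quot r := Quot.map id fun a b hab => hsr a b hab
  have hsurj : Function.Surjective coarsen := by
    rintro ⟨a⟩
    exact ⟨Quot.mk s a, rfl⟩
  have hninj : ¬ Function.Injective coarsen := fun hinj =>
    hsxy (hs.eqvGen_iff.mp (Quot.eq.mp (hinj (Quot.sound hrxy))))
  exact lt_of_not_ge fun hcard => hninj (hsurj.bijective_of_nat_card_le hcard).1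

theorem IsRefinementOperator.isFixedPt_iterate_card [Fintype V]
    {f : (V → V → Prop) → V → V → Prop} (hf : IsRefinementOperator f) {r : V → V → Prop}
    (hr : Equivalence r) : Function.IsFixedPt f (f^[Fintype.card V] r) := by
  refine Function.isFixedPt_iterate_of_lt_of_le (fun r => Nat.card (Quot r)) (fun n => ?_)
    (fun n hn => ?_)
  · rw [← Nat.card_eq_fintype_card]
    exact Nat.card_le_card_of_surjective _ Quot.mk_surjective
  · have hrn := (hf.iterate n).equivalence hr
    exact card_quot_lt_card_quot (hf.equivalence hrn) (hf.le hrn) hn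

theorem ncard_setOf_and_eq_of_le [Finite V] {r s : V → V → Prop} (hr : Equivalence r)
    (hs : Equivalence s) (hrs : r ≤ s) {P Q : V → Prop}
    (h : ∀ z, {u | r u z ∧ P u}.ncard = {u | r u z ∧ Q u}.ncard) (z : V) :
    {u | s u z ∧ P u}.ncard = {u | s u z ∧ Q u}.ncard := by
  classical
  have := Fintype.ofFinite V
  have : Fintype (Quot r) := @Fintype.ofFinite _ (Finite.of_surjective _ Quot.mk_surjective)
  let classOf : V → Quot r := Quot.mk r
  have hclassOf : ∀ u a, classOf u = classOf a ↔ r u a := fun u a => by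
    rw [← hr.eqvGen_iff]; exact Quot.eq
  have fiber : ∀ (R : V → Prop) (a : V),
      {u | (s u z ∧ R u) ∧ classOf u = classOf a}.ncard =
        if s a z then {u | r u a ∧ R u}.ncard else 0 := by
    intro R a
    split_ifs with haz
    · congr 1
      ext u
      simp only [Set.mem_ofPred_eq, hclassOf]
      exact ⟨fun ⟨⟨_, hR⟩, hua⟩ => ⟨hua, hR⟩,
        fun ⟨hua, hR⟩ => ⟨⟨hs.trans (hrs u a hua) haz, hR⟩, hua⟩⟩
    · rw [Set.ncard_eq_zero]
      ext u
      simp only [Set.mem_ofPred_eq, hclassOf, Set.mem_empty_iff_false, iff_false]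
      exact fun ⟨⟨huz, _⟩, hua⟩ => haz (hs.trans (hs.symm (hrs u a hua)) huz)
  simp only [Set.ncard_eq_toFinset_card', Set.toFinset_ofPred] at fiber h ⊢
  rw [Finset.card_eq_sum_card_fiberwise (f := classOf) (t := Finset.univ) (by simp),
    Finset.card_eq_sum_card_fiberwise (f := classOf) (t := Finset.univ) (by simp)]
  refine Finset.sum_congr rfl fun q _ => ?_
  obtain ⟨a, rfl⟩ : ∃ a, classOf a = q := Quot.mk_surjective q
  rw [Finset.filter_filter, Finset.filter_filter, fiber, fiber, h a]

end Refinement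

section ColorRefinement

variable {V C : Type*} (G : SimpleGraph V) (χ : V → V → C)

theorem isRefinementOperator_crStep [Finite V] : IsRefinementOperator (crStep G χ) where
  equivalence hr :=
    { refl := fun x => ⟨hr.refl x, fun _ _ _ => ⟨rfl, rfl⟩⟩
      symm := fun ⟨hxy, hcount⟩ =>
        ⟨hr.symm hxy, fun z c₁ c₂ => ⟨(hcount z c₁ c₂).1.symm, (hcount z c₁ c₂).2.symm⟩⟩
      trans := fun ⟨hxy, hcount⟩ ⟨hyz, hcount'⟩ =>
        ⟨hr.trans hxy hyz, fun z c₁ c₂ =>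
          ⟨(hcount z c₁ c₂).1.trans (hcount' z c₁ c₂).1,
            (hcount z c₁ c₂).2.trans (hcount' z c₁ c₂).2⟩⟩ }
  le _ _ _ h := h.1
  mono {r s} hr hs hrs x y h := by
    have reshape : ∀ (R : V → V → Prop) (w z : V) (A : V → Prop),
        {u | u ≠ w ∧ R u z ∧ A u} = {u | R u z ∧ u ≠ w ∧ A u} :=
      fun _ _ _ _ => Set.ext fun _ => and_left_comm
    have coarsen : ∀ {A B : V → Prop},
        (∀ z, {u | u ≠ x ∧ r u z ∧ A u}.ncard = {u | u ≠ y ∧ r u z ∧ B u}.ncard) →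
        ∀ z, {u | u ≠ x ∧ s u z ∧ A u}.ncard = {u | u ≠ y ∧ s u z ∧ B u}.ncard := by
      intro A B hAB z
      rw [reshape, reshape]
      refine ncard_setOf_and_eq_of_le hr hs hrs (fun z => ?_) z
      rw [← reshape, ← reshape]
      exact hAB z
    exact ⟨hrs x y h.1, fun z c₁ c₂ =>
      ⟨coarsen (fun z => (h.2 z c₁ c₂).1) z, coarsen (fun z => (h.2 z c₁ c₂).2) z⟩⟩

theorem isRefinementOperator_crStable [Fintype V] : IsRefinementOperator (crStable G χ) :=
  (isRefinementOperator_crStep G χ).iterate _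

theorem isRefinementOperator_splitSmall [Finite V] (t : ℕ) :
    IsRefinementOperator (splitSmall (V := V) t) where
  equivalence {r} hr :=
    { refl := fun x => ⟨hr.refl x, fun _ => rfl⟩
      symm := fun {x y} ⟨hxy, hsmall⟩ => by
        have hclass : {u | r u y} = {u | r u x} :=
          Set.ext fun u => ⟨fun h => hr.trans h (hr.symm hxy), fun h => hr.trans h hxy⟩
        exact ⟨hr.symm hxy, fun hy => (hsmall (hclass ▸ hy)).symm⟩
      trans := fun ⟨hxy, hsmall⟩ ⟨hyz, hsmall'⟩ =>
        ⟨hr.trans hxy hyz, fun hx => by obtain rfl := hsmall hx; exact hsmall' hx⟩ }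
  le _ _ _ h := h.1
  mono _ _ hrs x y h :=
    ⟨hrs x y h.1, fun hx => h.2 ((Set.ncard_le_ncard fun u hu => hrs u x hu).trans hx)⟩

variable (t : ℕ)

theorem isRefinementOperator_splitSmall_crStable [Fintype V] :
    IsRefinementOperator fun r => splitSmall t (crStable G χ r) :=
  (isRefinementOperator_splitSmall t).comp (isRefinementOperator_crStable G χ)

theorem tCRStable_tCRStable [Fintype V] {r : V → V → Prop} (hr : Equivalence r) :
    tCRStable G χ t (tCRStable G χ t r) = tCRStable G χ t r := by
  have hfix := (isRefinementOperator_splitSmall_crStable G χ t).isFixedPt_iterate_card hr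
  have hstable :
      tCRStable G χ t r = (fun r => splitSmall t (crStable G χ r))^[Fintype.card V] r := by
    rw [tCRStable, Function.iterate_succ_apply', hfix.eq]
  rw [hstable]
  exact Function.iterate_fixed hfix.eq _

theorem isRefinementOperator_tCRStable [Fintype V] : IsRefinementOperator (tCRStable G χ t) :=
  (isRefinementOperator_splitSmall_crStable G χ t).iterate _

end ColorRefinement

section Closure

variable {V C : Type*}

theorem equivalence_indivRel (χ : V → V → C) (X : Set V) : Equivalence (indivRel χ X) where
  refl _ := ⟨rfl, Iff.rfl, fun _ => rfl⟩
  symm := fun ⟨hχ, hmem, heq⟩ => ⟨hχ.symm, hmem.symm, fun hy => (heq (hmem.mpr hy)).symm⟩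
  trans := fun ⟨hχ, hmem, heq⟩ ⟨hχ', hmem', heq'⟩ =>
    ⟨hχ.trans hχ', hmem.trans hmem', fun hx => (heq hx).trans (heq' (hmem.mp hx))⟩

variable [Fintype V] {G : SimpleGraph V} {χ : V → V → C} {t : ℕ} {X Y : Set V}

theorem equivalence_tCRStable_indivRel : Equivalence (tCRStable G χ t (indivRel χ X)) :=
  (isRefinementOperator_tCRStable G χ t).equivalence (equivalence_indivRel χ X)

theorem mem_clSet_iff {v : V} :
    v ∈ clSet G χ t X ↔ ∀ u, tCRStable G χ t (indivRel χ X) u v → u = v := by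
  rw [clSet, Set.mem_ofPred_eq, Set.ncard_eq_one]
  constructor
  · rintro ⟨a, ha⟩ u hu
    have hv : v ∈ ({a} : Set V) := ha ▸ equivalence_tCRStable_indivRel.refl v
    have hu : u ∈ ({a} : Set V) := ha ▸ hu
    rw [Set.mem_singleton_iff] at hu hv
    rw [hu, hv]
  · exact fun h =>
      ⟨v, Set.eq_singleton_iff_unique_mem.mpr ⟨equivalence_tCRStable_indivRel.refl v, h⟩⟩

theorem tCRStable_indivRel_le_indivRel (hY : Y ⊆ clSet G χ t X) :
    tCRStable G χ t (indivRel χ X) ≤ indivRel χ Y := by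
  intro a b hab
  have hba := equivalence_tCRStable_indivRel.symm hab
  have hinY : a ∈ Y → a = b := fun ha => (mem_clSet_iff.mp (hY ha) b hba).symm
  refine ⟨((isRefinementOperator_tCRStable G χ t).le (equivalence_indivRel χ X) a b hab).1,
    ⟨fun ha => hinY ha ▸ ha, fun hb => mem_clSet_iff.mp (hY hb) a hab ▸ hb⟩, hinY⟩

theorem clSet_subset_of_subset_clSet (hY : Y ⊆ clSet G χ t X) :
    clSet G χ t Y ⊆ clSet G χ t X := by
  have hle : tCRStable G χ t (indivRel χ X) ≤ tCRStable G χ t (indivRel χ Y) := by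
    rw [← tCRStable_tCRStable G χ t (equivalence_indivRel χ X)]
    exact (isRefinementOperator_tCRStable G χ t).mono equivalence_tCRStable_indivRel
      (equivalence_indivRel χ Y) (tCRStable_indivRel_le_indivRel hY)
  intro w hw
  rw [mem_clSet_iff] at hw ⊢
  exact fun a ha => hw a (hle a w ha)

end Closure

/-- Let `G` be a finite simple graph with a pair-coloring `χ` and `t ∈ ℕ`.
For all `u,v`: if `v ∈ cl_t^{(G,χ)}(u)`, then `cl_t^{(G,χ)}(v) ⊆ cl_t^{(G,χ)}(u)`.
In particular, if `(u,v)` and `(v,w)` are arcs of the `t`-closure graph and `u ≠ w`,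
then `(u,w)` is an arc of the `t`-closure graph. -/
theorem stmt_2 {V C : Type*} [Fintype V] (G : SimpleGraph V) (χ : V → V → C) (t : ℕ) :
    (∀ u v : V, v ∈ clSet G χ t {u} → clSet G χ t {v} ⊆ clSet G χ t {u}) ∧
    (∀ u v w : V, clArc G χ t u v → clArc G χ t v w → u ≠ w → clArc G χ t u w) := by
  refine ⟨fun u v hv => clSet_subset_of_subset_clSet (Set.singleton_subset_iff.mpr hv), ?_⟩
  rintro u v w ⟨-, hv⟩ ⟨-, hw⟩ huw
  exact ⟨huw, clSet_subset_of_subset_clSet (Set.singleton_subset_iff.mpr hv) hw⟩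
end

section
/- Assume the Setup, and set D := ⋃_{v∈X} D(v). Then: (1) D is χ-invariant, i.e., for all u,u' ∈ V(G) with χ(u,u) = χ(u',u'), u ∈ D if and only if u' ∈ D; (2) for all distinct u,w ∈ V(G) and distinct u',w' ∈ V(G) with χ(u,w) = χ(u',w'), if u and w lie in a common set D(v) for some v ∈ X, then u' and w' lie in a common set D(v') for some v' ∈ X; and (3) the multiset {{χ(u,w) : u ∈ D(v), w ∈ D(v)}} is the same for all v ∈ X. -/
open SimpleGraph

/-!
By 2-stability on the closure graph `H`, membership `w ∈ D(v)` (that is, `w = v` or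
`(v, w) ∈ E(H)`) is read off the colour `χ(v, w)`, as well as off `χ(w, v)`. Moreover, whenever
`χ(p, q) = χ(p', q')`, the counting condition yields a bijection `u ↦ u'` of `V` with
`χ(p', u') = χ(p, u)` and `χ(u', q') = χ(u, q)`. Transporting `v` along such a bijection gives
(1) and (2). For (3), compose a bijection `x ↦ x'` for `(v, v)`, `(v', v')` with, for each `x`,
a bijection for `(x, v)`, `(x', v')`: the resulting bijection of `V × V` maps the pairs of
`D(v)²` of colour `c` onto those of `D(v')²`.
-/

section Refinement

variable {V C : Type*} [Fintype V] (G : SimpleGraph V) (χ : V → V → C) (t : ℕ)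

theorem crStable_le {r : V → V → Prop} {x y : V} (h : crStable G χ r x y) : r x y :=
  Function.Iterate.rec (fun s : V → V → Prop => ∀ x y, s x y → r x y) (fun _ _ => id)
    (fun _ hs x y h => hs x y h.1) _ x y h

theorem tCRStable_le {r : V → V → Prop} {x y : V} (h : tCRStable G χ t r x y) : r x y :=
  Function.Iterate.rec (fun s : V → V → Prop => ∀ x y, s x y → r x y) (fun _ _ => id)
    (fun _ hs x y h => hs x y (crStable_le G χ h.1)) _ x y h

theorem crStable_refl {r : V → V → Prop} (hr : ∀ x, r x x) (x : V) : crStable G χ r x x :=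
  Function.Iterate.rec (fun s : V → V → Prop => ∀ x, s x x) hr
    (fun _ hs x => ⟨hs x, fun _ _ _ => ⟨rfl, rfl⟩⟩) _ x

theorem tCRStable_refl {r : V → V → Prop} (hr : ∀ x, r x x) (x : V) :
    tCRStable G χ t r x x :=
  Function.Iterate.rec (fun s : V → V → Prop => ∀ x, s x x) hr
    (fun _ hs x => ⟨crStable_refl G χ hs x, fun _ => rfl⟩) _ x

end Refinement

def closedOutNbhd {V : Type*} (E : V → V → Prop) (v : V) : Set V :=
  {x | x = v ∨ E v x}

theorem mem_clSet_self {V C : Type*} [Fintype V] (G : SimpleGraph V) (χ : V → V → C) (t : ℕ)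
    (v : V) : v ∈ clSet G χ t {v} := by
  have hclass : {u | tCRStable G χ t (indivRel χ {v}) u v} = {v} := by
    ext u
    refine ⟨fun h => (tCRStable_le G χ t h).2.1.mpr rfl, ?_⟩
    rintro rfl
    exact tCRStable_refl G χ t (fun _ => ⟨rfl, Iff.rfl, fun _ => rfl⟩) u
  simp only [clSet, Set.mem_ofPred_eq, hclass, Set.ncard_singleton]

theorem clSet_singleton_eq_closedOutNbhd {V C : Type*} [Fintype V] (G : SimpleGraph V)
    (χ : V → V → C) (t : ℕ) (v : V) : clSet G χ t {v} = closedOutNbhd (clArc G χ t) v := by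
  ext x
  refine ⟨fun hx => (eq_or_ne x v).imp_right fun hxv => ⟨hxv.symm, hx⟩, ?_⟩
  rintro (rfl | ⟨-, hx⟩)
  exacts [mem_clSet_self G χ t x, hx]

theorem exists_equiv_apply_eq_of_ncard_fiber_eq {α α' β : Type*} [Finite α] [Finite α']
    {f : α → β} {g : α' → β} (h : ∀ b, {a | f a = b}.ncard = {a | g a = b}.ncard) :
    ∃ e : α ≃ α', ∀ a, g (e a) = f a := by
  have fiber (b : β) : Nonempty ({a // f a = b} ≃ {a // g a = b}) := Finite.card_eq.mp (h b)
  exact ⟨Equiv.ofFiberEquiv fun b => (fiber b).some, Equiv.ofFiberEquiv_map _⟩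

namespace IsTwoStableDigraph

variable {V C : Type*} {E : V → V → Prop} {χ : V → V → C}

theorem exists_equiv [Finite V] (hχ : IsTwoStableDigraph E χ) {p q p' q' : V}
    (hc : χ p q = χ p' q') : ∃ e : V ≃ V, ∀ u, χ p' (e u) = χ p u ∧ χ (e u) q' = χ u q := by
  obtain ⟨e, he⟩ := exists_equiv_apply_eq_of_ncard_fiber_eq
    (f := fun u => (χ p u, χ u q)) (g := fun u => (χ p' u, χ u q'))
    fun b => by simpa only [Prod.ext_iff] using (hχ p q p' q' hc).2 b.1 b.2
  exact ⟨e, fun u => Prod.ext_iff.mp (he u)⟩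

theorem mem_closedOutNbhd_congr_right (hχ : IsTwoStableDigraph E χ) {v x v' x' : V}
    (hc : χ v x = χ v' x') : x ∈ closedOutNbhd E v ↔ x' ∈ closedOutNbhd E v' := by
  obtain ⟨⟨hdiag, hE, -⟩, -⟩ := hχ v x v' x' hc
  exact or_congr (eq_comm.trans (hdiag.trans eq_comm)) hE

theorem mem_closedOutNbhd_congr_left (hχ : IsTwoStableDigraph E χ) {v x v' x' : V}
    (hc : χ x v = χ x' v') : x ∈ closedOutNbhd E v ↔ x' ∈ closedOutNbhd E v' := by
  obtain ⟨⟨hdiag, -, hE, -⟩, -⟩ := hχ x v x' v' hc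
  exact or_congr hdiag hE

theorem exists_closedOutNbhd_of_eq [Finite V] (hχ : IsTwoStableDigraph E χ)
    {u w u' w' v : V} (hc : χ u w = χ u' w') (hu : u ∈ closedOutNbhd E v)
    (hw : w ∈ closedOutNbhd E v) :
    ∃ z, χ z z = χ v v ∧ u' ∈ closedOutNbhd E z ∧ w' ∈ closedOutNbhd E z := by
  obtain ⟨e, he⟩ := hχ.exists_equiv hc
  obtain ⟨hu', hw'⟩ := he v
  obtain ⟨⟨-, -, -, hdiag, -⟩, -⟩ := hχ _ _ _ _ hw'
  exact ⟨e v, hdiag, (hχ.mem_closedOutNbhd_congr_left hu'.symm).mp hu,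
    (hχ.mem_closedOutNbhd_congr_right hw'.symm).mp hw⟩

theorem ncard_closedOutNbhd_pairs_eq [Finite V] (hχ : IsTwoStableDigraph E χ) {v v' : V}
    (hv : χ v v = χ v' v') (c : C) :
    {p : V × V | p.1 ∈ closedOutNbhd E v ∧ p.2 ∈ closedOutNbhd E v ∧ χ p.1 p.2 = c}.ncard =
      {p : V × V | p.1 ∈ closedOutNbhd E v' ∧ p.2 ∈ closedOutNbhd E v' ∧
        χ p.1 p.2 = c}.ncard := by
  obtain ⟨e, he⟩ := hχ.exists_equiv hv
  choose e' he' using fun x => hχ.exists_equiv (he x).2.symm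
  have hpre : {p : V × V | p.1 ∈ closedOutNbhd E v ∧ p.2 ∈ closedOutNbhd E v ∧
      χ p.1 p.2 = c} = Equiv.prodShear e e' ⁻¹'
        {p | p.1 ∈ closedOutNbhd E v' ∧ p.2 ∈ closedOutNbhd E v' ∧ χ p.1 p.2 = c} := by
    ext ⟨x, y⟩
    simp only [Set.mem_preimage, Set.mem_ofPred_eq, Equiv.prodShear_apply,
      hχ.mem_closedOutNbhd_congr_left (he x).2.symm,
      hχ.mem_closedOutNbhd_congr_left (he' x y).2.symm, (he' x y).1]
  rw [hpre, Set.ncard_preimage_of_injective_subset_range (Equiv.injective _)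
    (Equiv.range_eq_univ _ ▸ Set.subset_univ _)]

end IsTwoStableDigraph

theorem stmt_9_general {V C : Type*} [Fintype V]
    (G : SimpleGraph V)
    (t : ℕ)
    (χ : V → V → C)
    (h2H : IsTwoStableDigraph (clArc G χ t) χ)
    (c₀ : C) :
    (∀ u u' : V, χ u u = χ u' u' →
      ((u ∈ ⋃ v ∈ {x : V | χ x x = c₀}, clSet G χ t {v}) ↔
        (u' ∈ ⋃ v ∈ {x : V | χ x x = c₀}, clSet G χ t {v}))) ∧
    (∀ u w u' w' : V, u ≠ w → u' ≠ w' → χ u w = χ u' w' →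
      (∃ v ∈ {x : V | χ x x = c₀}, u ∈ clSet G χ t {v} ∧ w ∈ clSet G χ t {v}) →
      (∃ v' ∈ {x : V | χ x x = c₀}, u' ∈ clSet G χ t {v'} ∧ w' ∈ clSet G χ t {v'})) ∧
    (∀ v ∈ {x : V | χ x x = c₀}, ∀ v' ∈ {x : V | χ x x = c₀}, ∀ c : C,
      {p : V × V | p.1 ∈ clSet G χ t {v} ∧ p.2 ∈ clSet G χ t {v} ∧ χ p.1 p.2 = c}.ncard =
        {p : V × V | p.1 ∈ clSet G χ t {v'} ∧ p.2 ∈ clSet G χ t {v'} ∧ χ p.1 p.2 = c}.ncard) := by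
  have transfer : ∀ {u w u' w' : V}, χ u w = χ u' w' →
      (∃ v, χ v v = c₀ ∧ u ∈ closedOutNbhd (clArc G χ t) v ∧
        w ∈ closedOutNbhd (clArc G χ t) v) →
      ∃ v, χ v v = c₀ ∧ u' ∈ closedOutNbhd (clArc G χ t) v ∧
        w' ∈ closedOutNbhd (clArc G χ t) v := by
    rintro u w u' w' hc ⟨v, rfl, hu, hw⟩
    exact h2H.exists_closedOutNbhd_of_eq hc hu hw
  simp only [clSet_singleton_eq_closedOutNbhd, Set.mem_iUnion, Set.mem_ofPred_eq, exists_prop]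
  refine ⟨fun u u' hu => ⟨?_, ?_⟩, fun u w u' w' _ _ hc => transfer hc, ?_⟩
  · rintro ⟨v, hv, hmem⟩
    obtain ⟨z, hz, hmem', -⟩ := transfer hu ⟨v, hv, hmem, hmem⟩
    exact ⟨z, hz, hmem'⟩
  · rintro ⟨v, hv, hmem⟩
    obtain ⟨z, hz, hmem', -⟩ := transfer hu.symm ⟨v, hv, hmem, hmem⟩
    exact ⟨z, hz, hmem'⟩
  · rintro v rfl v' hv' c
    exact h2H.ncard_closedOutNbhd_pairs_eq hv'.symm c

/-- Assume the Setup, and set `D := ⋃_{v∈X} D(v)`. Then: (1) `D` is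
`χ`-invariant; (2) for all distinct `u,w` and distinct `u',w'` with `χ(u,w) = χ(u',w')`,
if `u` and `w` lie in a common set `D(v)` for some `v ∈ X`, then `u'` and `w'` lie in a
common set `D(v')` for some `v' ∈ X`; and (3) the multiset `{{χ(u,w) : u,w ∈ D(v)}}` is
the same for all `v ∈ X`. -/
theorem stmt_9 {V C : Type*} [Fintype V]
    (a : ℝ) (ha : 2 ≤ a) (hdeg : DegSumConst a)
    (h : ℕ) (hh : 1 ≤ h)
    (G : SimpleGraph V) (hconn : G.Connected)
    (t : ℕ) (ht : 144 * a ^ 2 * (h : ℝ) ^ 5 ≤ (t : ℝ))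
    (χ : V → V → C) (h2G : IsTwoStable G χ)
    (h2H : IsTwoStableDigraph (clArc G χ t) χ)
    (c₀ : C) (hc₀ : ∃ v : V, χ v v = c₀ ∧ MaximalVtx G χ t v) :
    (∀ u u' : V, χ u u = χ u' u' →
      ((u ∈ ⋃ v ∈ {x : V | χ x x = c₀}, clSet G χ t {v}) ↔
        (u' ∈ ⋃ v ∈ {x : V | χ x x = c₀}, clSet G χ t {v}))) ∧
    (∀ u w u' w' : V, u ≠ w → u' ≠ w' → χ u w = χ u' w' →
      (∃ v ∈ {x : V | χ x x = c₀}, u ∈ clSet G χ t {v} ∧ w ∈ clSet G χ t {v}) →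
      (∃ v' ∈ {x : V | χ x x = c₀}, u' ∈ clSet G χ t {v'} ∧ w' ∈ clSet G χ t {v'})) ∧
    (∀ v ∈ {x : V | χ x x = c₀}, ∀ v' ∈ {x : V | χ x x = c₀}, ∀ c : C,
      {p : V × V | p.1 ∈ clSet G χ t {v} ∧ p.2 ∈ clSet G χ t {v} ∧ χ p.1 p.2 = c}.ncard =
        {p : V × V | p.1 ∈ clSet G χ t {v'} ∧ p.2 ∈ clSet G χ t {v'} ∧ χ p.1 p.2 = c}.ncard) :=
  stmt_9_general G t χ h2H c₀
end

section
/- Let G be a finite connected bipartite simple graph with bipartition (V₁,V₂) that excludes K_h as a topological subgraph, and let χ be a pair-coloring that is 2-stable on G and satisfies χ(v₁,v₂) = χ(v₁',v₂') for all (v₁,v₂),(v₁',v₂') ∈ V₁×V₂ with v₁v₂ ∈ E(G) and v₁'v₂' ∈ E(G). Assume |V₂| > a·h²·|V₁|. Let E* := { {v₁,v₂} : v₁,v₂ ∈ V₁, v₁ ≠ v₂, and some w ∈ V₂ is adjacent to both v₁ and v₂ }. Then there are colors c₁,…,c_r ∈ χ(V₁×V₁) such that: (1) E* = ⋃_{i∈[r]}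 E_{c_i}, where E_{c_i} := { {v₁,v₂} : v₁,v₂ ∈ V₁, v₁ ≠ v₂, χ(v₁,v₂) = c_i }; (2) the graph H := (V₁, E*) is connected; and (3) for every i ∈ [r] the graph H_i := (V₁, E_{c_i}) is a topological subgraph of G. -/
open SimpleGraph

/-!
By 2-stability the number of common neighbours of a pair depends only on its colour; this gives
(1), and (2) holds because walks in `G` alternate between `V₁` and `V₂`.

For (3) fix a colour `c` of `E*`, let `m` be the number of common neighbours of a pair of colour
`c`, and let `k` be the number of ordered pairs of colour `c` inside the neighbourhood of a
vertex `u ∈ V₂`. Since all edges between `V₁` and `V₂` have one colour, `k` does not depend on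
`u`. If `k ≤ m`, every edge of `H_c` has `m` common neighbours and every vertex is a common
neighbour of at most `k` edges, so Hall's theorem gives every edge its own common neighbour; these
midpoints subdivide `H_c` into `G`. If `k > m`, the same count read from the other side lets
Hall's theorem give every `u ∈ V₂` its own pair of colour `c` in its neighbourhood. The graph on
`V₁` formed by these pairs has degree sum at least `|V₂| > a·h²·|V₁|`, so it contains a subdivided
`K_h`, and subdividing its edges through the chosen vertices of `V₂` puts a subdivided `K_h` into
`G`, which is impossible.
-/

theorem Set.ncard_prod_eq_mul {α β : Type*} [Finite α] [Finite β] (A : Set α) (B : α → Set β)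
    {k : ℕ} (hB : ∀ x ∈ A, (B x).ncard = k) :
    {p : α × β | p.1 ∈ A ∧ p.2 ∈ B p.1}.ncard = A.ncard * k := by
  classical
  have := Fintype.ofFinite α
  have := Fintype.ofFinite β
  simp only [Set.ncard_eq_toFinset_card', Set.toFinset_ofPred, Finset.card_filter,
    Fintype.sum_prod_type] at hB ⊢
  calc ∑ x, ∑ y, (if x ∈ A ∧ y ∈ B x then 1 else 0) = ∑ x, if x ∈ A then k else 0 := by
        refine Finset.sum_congr rfl fun x _ => ?_
        by_cases hx : x ∈ A
        · simp [hx, ← hB x hx]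
        · simp [hx]
    _ = A.toFinset.card * k := by simp [Finset.sum_ite]

open Finset in
theorem exists_injective_of_ncard_le {ι α : Type*} [Finite ι] [Finite α] (r : ι → α → Prop)
    {k : ℕ} (hk : 0 < k) (hι : ∀ i, k ≤ {a | r i a}.ncard) (hα : ∀ a, {i | r i a}.ncard ≤ k) :
    ∃ f : ι → α, f.Injective ∧ ∀ i, r i (f i) := by
  classical
  have := Fintype.ofFinite ι
  have := Fintype.ofFinite α
  refine (Fintype.all_card_le_filter_rel_iff_exists_injective r).1 fun A => ?_
  refine Nat.le_of_mul_le_mul_right (card_mul_le_card_mul r (fun i _ => ?_) fun a _ => ?_) hk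
  · refine (hι i).trans_eq ?_
    rw [Set.ncard_eq_toFinset_card']
    congr 1
    ext a
    simp only [Set.mem_toFinset, bipartiteAbove, mem_filter, mem_univ, true_and]
    exact ⟨fun h => ⟨⟨i, ‹_›, h⟩, h⟩, And.right⟩
  · refine le_trans ?_ (hα a)
    rw [Set.ncard_eq_toFinset_card']
    exact card_le_card fun i hi => by simp_all [bipartiteBelow]

namespace SimpleGraph

variable {V W : Type*}

/-- `ψ` and `μ` embed the `1`-subdivision of `Γ` into `G`: the vertex `w` of `Γ` goes to `ψ w`
and the subdivision vertex of the edge `e` goes to `μ e`. -/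
structure IsSubdivisionEmbedding (Γ : SimpleGraph W) (G : SimpleGraph V) (ψ : W → V)
    (μ : Γ.edgeSet → V) : Prop where
  injective_vertex : ψ.Injective
  injective_midpoint : μ.Injective
  midpoint_ne_vertex : ∀ e w, μ e ≠ ψ w
  adj_midpoint : ∀ e : Γ.edgeSet, ∀ x ∈ (e : Sym2 W), G.Adj (ψ x) (μ e)

namespace IsSubdivisionEmbedding

variable {Γ : SimpleGraph W} {G : SimpleGraph V} {ψ : W → V} {μ : Γ.edgeSet → V}
  (hΓ : IsSubdivisionEmbedding Γ G ψ μ)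

def liftWalk : ∀ {A B : W}, Γ.Walk A B → G.Walk (ψ A) (ψ B)
  | _, _, .nil => .nil
  | _, _, .cons h p =>
    .cons (hΓ.adj_midpoint ⟨_, h⟩ _ (Sym2.mem_mk_left _ _))
      (.cons (hΓ.adj_midpoint ⟨_, h⟩ _ (Sym2.mem_mk_right _ _)).symm (liftWalk p))

theorem length_liftWalk {A B : W} (p : Γ.Walk A B) : (hΓ.liftWalk p).length = 2 * p.length := by
  induction p with
  | nil => rfl
  | cons h p ih => simp only [liftWalk, Walk.length_cons, ih]; ring

theorem liftWalk_append {A B D : W} (p : Γ.Walk A B) (q : Γ.Walk B D) :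
    hΓ.liftWalk (p.append q) = (hΓ.liftWalk p).append (hΓ.liftWalk q) := by
  induction p with
  | nil => rfl
  | cons h p ih => simp [liftWalk, ih]

theorem liftWalk_reverse {A B : W} (p : Γ.Walk A B) :
    hΓ.liftWalk p.reverse = (hΓ.liftWalk p).reverse := by
  induction p with
  | nil => rfl
  | @cons u v w h p ih =>
    have hμ : μ ⟨s(v, u), h.symm⟩ = μ ⟨s(u, v), h⟩ := congrArg μ (Subtype.ext Sym2.eq_swap)
    simp only [Walk.reverse_cons, liftWalk_append, ih, liftWalk, ← Walk.append_assoc]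
    congr 1
    exact Walk.ext_support (by simp [hμ])

theorem mem_support_liftWalk {A B : W} (p : Γ.Walk A B) (z : V) :
    z ∈ (hΓ.liftWalk p).support ↔
      (∃ w ∈ p.support, ψ w = z) ∨ ∃ e : Γ.edgeSet, (e : Sym2 W) ∈ p.edges ∧ μ e = z := by
  induction p with
  | nil => simp [liftWalk, eq_comm]
  | cons h p ih =>
    simp only [liftWalk, Walk.support_cons, Walk.edges_cons, List.mem_cons, ih]
    constructor
    · rintro (rfl | rfl | ⟨w, hw, rfl⟩ | ⟨e, he, rfl⟩)
      · exact .inl ⟨_, .inl rfl, rfl⟩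
      · exact .inr ⟨_, .inl rfl, rfl⟩
      · exact .inl ⟨w, .inr hw, rfl⟩
      · exact .inr ⟨e, .inr he, rfl⟩
    · rintro (⟨w, rfl | hw, rfl⟩ | ⟨e, he | he, rfl⟩)
      · exact .inl rfl
      · exact .inr (.inr (.inl ⟨w, hw, rfl⟩))
      · exact .inr (.inl (congrArg μ (Subtype.ext he)))
      · exact .inr (.inr (.inr ⟨e, he, rfl⟩))

theorem isPath_liftWalk {A B : W} {p : Γ.Walk A B} (hp : p.IsPath) :
    (hΓ.liftWalk p).IsPath := by
  induction p with
  | nil => exact Walk.IsPath.nil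
  | @cons u v w h p ih =>
    rw [Walk.cons_isPath_iff] at hp
    simp only [liftWalk, Walk.cons_isPath_iff, Walk.support_cons, List.mem_cons,
      hΓ.mem_support_liftWalk, not_or]
    refine ⟨⟨ih hp.1, ?_, ?_⟩, (hΓ.midpoint_ne_vertex _ _).symm, ?_, ?_⟩
    · rintro ⟨x, -, hx⟩
      exact hΓ.midpoint_ne_vertex _ x hx.symm
    · rintro ⟨e, he, hμe⟩
      obtain rfl : e = ⟨s(u, v), h⟩ := hΓ.injective_midpoint hμe
      exact hp.2 (p.fst_mem_support_of_mem_edges he)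
    · rintro ⟨x, hx, hψx⟩
      exact hp.2 (hΓ.injective_vertex hψx ▸ hx)
    · rintro ⟨e, -, hμe⟩
      exact hΓ.midpoint_ne_vertex e u hμe

theorem mem_walkInterior_of_liftWalk {A B w : W} {p : Γ.Walk A B}
    (hw : w ∈ p.support) (hψw : ψ w ∈ walkInterior (hΓ.liftWalk p)) : w ∈ walkInterior p :=
  ⟨hw, fun h => hψw.2.1 (congrArg ψ h), fun h => hψw.2.2 (congrArg ψ h)⟩

end IsSubdivisionEmbedding

theorem mem_sym2_of_mem_support_of_disjoint {G : SimpleGraph V} {a b c d z : V}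
    {p : G.Walk a b} {q : G.Walk c d} {R : Set V} (hpR : Disjoint (walkInterior p) R)
    (hpq : Disjoint (walkInterior p) (walkInterior q)) (hc : c ∈ R) (hd : d ∈ R)
    (hzp : z ∈ p.support) (hzq : z ∈ q.support) : z ∈ s(a, b) := by
  rw [Sym2.mem_iff]
  by_contra! hz
  have hzp' : z ∈ walkInterior p := ⟨hzp, hz.1, hz.2⟩
  by_cases hzc : z = c
  · exact Set.disjoint_left.1 hpR hzp' (hzc ▸ hc)
  by_cases hzd : z = d
  · exact Set.disjoint_left.1 hpR hzp' (hzd ▸ hd)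
  exact Set.disjoint_left.1 hpq hzp' ⟨hzq, hzc, hzd⟩

theorem sym2_eq_of_mem_edges_of_disjoint {G : SimpleGraph V} {a b c d : V} {e : Sym2 V}
    {p : G.Walk a b} {q : G.Walk c d} {R : Set V} (hpR : Disjoint (walkInterior p) R)
    (hqR : Disjoint (walkInterior q) R) (hpq : Disjoint (walkInterior p) (walkInterior q))
    (ha : a ∈ R) (hb : b ∈ R) (hc : c ∈ R) (hd : d ∈ R) (hep : e ∈ p.edges) (heq : e ∈ q.edges) :
    s(a, b) = s(c, d) := by
  induction e with
  | h x y =>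
  have mem_both : ∀ z ∈ s(x, y), z ∈ s(a, b) ∧ z ∈ s(c, d) := fun z hz =>
    ⟨mem_sym2_of_mem_support_of_disjoint hpR hpq hc hd
      (p.mem_support_of_mem_edges hep hz) (q.mem_support_of_mem_edges heq hz),
    mem_sym2_of_mem_support_of_disjoint hqR hpq.symm ha hb
      (q.mem_support_of_mem_edges heq hz) (p.mem_support_of_mem_edges hep hz)⟩
  have hx := mem_both x (Sym2.mem_mk_left x y)
  have hy := mem_both y (Sym2.mem_mk_right x y)
  exact Sym2.eq_of_ne_mem (p.edges_subset_edgeSet hep).ne hx.1 hy.1 hx.2 hy.2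

end SimpleGraph

section TopologicalSubgraph

variable {V W U : Type*}

theorem IsTopSubgraph.refl (Γ : SimpleGraph W) : IsTopSubgraph Γ Γ := by
  refine ⟨id, Function.injective_id, fun x y h => h.toWalk, fun x y h => ⟨?_, by simp⟩,
    fun x y h => rfl, fun x y h => ?_, fun x y h x' y' h' _ => ?_⟩
  · simp [Walk.isPath_def, h.ne]
  all_goals
    refine Set.disjoint_left.2 fun z ⟨hz, hzx, hzy⟩ => ?_
    simp_all

theorem IsTopSubgraph.trans_isSubdivisionEmbedding {K : SimpleGraph U} {Γ : SimpleGraph W}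
    {G : SimpleGraph V} {ψ : W → V} {μ : Γ.edgeSet → V} (hK : IsTopSubgraph K Γ)
    (hΓ : IsSubdivisionEmbedding Γ G ψ μ) : IsTopSubgraph K G := by
  obtain ⟨φ, hφ, P, hPpath, hPrev, hPrange, hPdisj⟩ := hK
  refine ⟨ψ ∘ φ, hΓ.injective_vertex.comp hφ, fun x y hxy => hΓ.liftWalk (P x y hxy),
    fun x y hxy => ⟨hΓ.isPath_liftWalk (hPpath x y hxy).1, ?_⟩,
    fun x y hxy => by simp only [hPrev x y hxy, hΓ.liftWalk_reverse], fun x y hxy => ?_,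
    fun x y hxy x' y' hxy' hne => ?_⟩
  · rw [hΓ.length_liftWalk]
    have := (hPpath x y hxy).2
    omega
  · refine Set.disjoint_left.2 ?_
    rintro z hz ⟨u, rfl⟩
    rcases (hΓ.mem_support_liftWalk _ _).1 hz.1 with ⟨w, hw, hwu⟩ | ⟨e, -, he⟩
    · obtain rfl := hΓ.injective_vertex hwu
      exact Set.disjoint_left.1 (hPrange x y hxy) (hΓ.mem_walkInterior_of_liftWalk hw hz)
        ⟨u, rfl⟩
    · exact hΓ.midpoint_ne_vertex e _ he
  · refine Set.disjoint_left.2 fun z hz hz' => ?_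
    rcases (hΓ.mem_support_liftWalk _ _).1 hz.1 with ⟨w, hw, rfl⟩ | ⟨e, he, rfl⟩ <;>
      rcases (hΓ.mem_support_liftWalk _ _).1 hz'.1 with ⟨w', hw', hww⟩ | ⟨e', he', hee⟩
    · obtain rfl := hΓ.injective_vertex hww
      exact Set.disjoint_left.1 (hPdisj x y hxy x' y' hxy' hne)
        (hΓ.mem_walkInterior_of_liftWalk hw hz) (hΓ.mem_walkInterior_of_liftWalk hw' hz')
    · exact hΓ.midpoint_ne_vertex e' w hee
    · exact hΓ.midpoint_ne_vertex e w' hww.symm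
    · obtain rfl := hΓ.injective_midpoint hee
      refine hne (Sym2.map.injective hφ ?_)
      simp only [Sym2.map_mk]
      exact sym2_eq_of_mem_edges_of_disjoint (hPrange x y hxy) (hPrange x' y' hxy')
        (hPdisj x y hxy x' y' hxy' hne) ⟨x, rfl⟩ ⟨y, rfl⟩ ⟨x', rfl⟩ ⟨y', rfl⟩ he he'

theorem isTopSubgraph_of_ncard_commonNbrs [Finite V] [Finite W] {Γ : SimpleGraph W}
    {G : SimpleGraph V} {ψ : W → V} (hψ : ψ.Injective) {m : ℕ} (hm : 0 < m)
    (hedge : ∀ e : Γ.edgeSet,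
      m ≤ {u | u ∉ Set.range ψ ∧ ∀ x ∈ (e : Sym2 W), G.Adj (ψ x) u}.ncard)
    (hload : ∀ u,
      {e : Γ.edgeSet | u ∉ Set.range ψ ∧ ∀ x ∈ (e : Sym2 W), G.Adj (ψ x) u}.ncard ≤ m) :
    IsTopSubgraph Γ G := by
  obtain ⟨μ, hμ, hμe⟩ := exists_injective_of_ncard_le _ hm hedge hload
  exact (IsTopSubgraph.refl Γ).trans_isSubdivisionEmbedding
    ⟨hψ, hμ, fun e w h => (hμe e).1 ⟨w, h.symm⟩, fun e => (hμe e).2⟩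

end TopologicalSubgraph

section DegreeBound

variable {V W U : Type*} {G : SimpleGraph V}

theorem DegSumConst.card_le_of_injective_pairs_fin {a : ℝ} (hdeg : DegSumConst a) {h : ℕ}
    (hh : 1 ≤ h) (hG : ¬ HasTopK G h) [Finite U] {n : ℕ} {ψ : Fin n → V} (hψ : ψ.Injective)
    {ι : U → V} (hι : ι.Injective) (hιψ : ∀ u w, ι u ≠ ψ w) {f : U → Fin n × Fin n}
    (hf : f.Injective) (hne : ∀ u, (f u).1 ≠ (f u).2)
    (hadj : ∀ u, G.Adj (ψ (f u).1) (ι u) ∧ G.Adj (ψ (f u).2) (ι u)) :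
    (Nat.card U : ℝ) ≤ a * h ^ 2 * n := by
  classical
  have := Fintype.ofFinite U
  let g : U → Sym2 (Fin n) := fun u => s((f u).1, (f u).2)
  let Γ := fromEdgeSet (Set.range g)
  have hΓ : ∀ u, Γ.Adj (f u).1 (f u).2 := fun u => by
    simpa [Γ, g, hne u] using ⟨u, .inl rfl⟩
  have hmid : ∀ e : Γ.edgeSet, ∃ u, g u = e := fun ⟨e, he⟩ => by
    rw [edgeSet_fromEdgeSet] at he
    exact he.1
  choose μ hμ using hmid
  have hsub : IsSubdivisionEmbedding Γ G ψ (ι ∘ μ) := by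
    refine ⟨hψ, hι.comp fun e e' h => Subtype.ext ?_, fun e w => hιψ _ w, fun e x hx => ?_⟩
    · rw [← hμ e, ← hμ e', h]
    · rw [← hμ e, Sym2.mem_iff] at hx
      rcases hx with rfl | rfl
      exacts [(hadj _).1, (hadj _).2]
  have hU : Fintype.card U ≤ Fintype.card Γ.Dart :=
    Fintype.card_le_of_injective (fun u => ⟨f u, hΓ u⟩) fun u u' h =>
      hf (congrArg Dart.toProd h)
  have hsum := hdeg n h Γ hh fun hK => hG (hK.trans_isSubdivisionEmbedding hsub)
  rw [dart_card_eq_sum_degrees] at hU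
  calc (Nat.card U : ℝ) ≤ ∑ v, (Γ.degree v : ℝ) := by
        rw [Nat.card_eq_fintype_card]
        exact_mod_cast hU
    _ = ∑ v, ({u | Γ.Adj v u}.ncard : ℝ) := by
      simp [Set.ncard_eq_toFinset_card', ← card_neighborFinset_eq_degree,
        neighborFinset_eq_filter]
    _ ≤ a * h ^ 2 * n := hsum

theorem DegSumConst.card_le_of_injective_pairs {a : ℝ} (hdeg : DegSumConst a) {h : ℕ}
    (hh : 1 ≤ h) (hG : ¬ HasTopK G h) [Finite W] [Finite U]
    {ψ : W → V} (hψ : ψ.Injective) {ι : U → V} (hι : ι.Injective) (hιψ : ∀ u w, ι u ≠ ψ w)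
    {f : U → W × W} (hf : f.Injective) (hne : ∀ u, (f u).1 ≠ (f u).2)
    (hadj : ∀ u, G.Adj (ψ (f u).1) (ι u) ∧ G.Adj (ψ (f u).2) (ι u)) :
    (Nat.card U : ℝ) ≤ a * h ^ 2 * Nat.card W := by
  let q := Finite.equivFin W
  have hf' : (Prod.map q q ∘ f).Injective := fun u u' h =>
    hf (Prod.ext (q.injective (congrArg Prod.fst h)) (q.injective (congrArg Prod.snd h)))
  simpa using hdeg.card_le_of_injective_pairs_fin hh hG (hψ.comp q.symm.injective) hι
    (fun u w => hιψ u _) hf' (fun u => by simpa using hne u) (fun u => by simpa using hadj u)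

end DegreeBound

namespace IsTwoStable

variable {V C : Type*} {G : SimpleGraph V} {χ : V → V → C}

theorem ncard_eq_of_color_eq [Finite V] (h2 : IsTwoStable G χ) (P : C → C → Prop)
    {v w v' w' : V} (h : χ v w = χ v' w') :
    {u | P (χ v u) (χ u w)}.ncard = {u | P (χ v' u) (χ u w')}.ncard := by
  classical
  have := Fintype.ofFinite V
  have hM : Finset.univ.val.map (fun u => (χ v u, χ u w)) =
      Finset.univ.val.map (fun u => (χ v' u, χ u w')) := by
    refine Multiset.ext.2 fun b => ?_
    have hb := (h2 v w v' w' h).2 b.1 b.2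
    simp only [Set.ncard_eq_toFinset_card', Set.toFinset_ofPred] at hb
    simp only [Multiset.count_map]
    have hcount : ∀ f : V → C × C, (Finset.univ.val.filter fun a => b = f a).card =
        (Finset.univ.filter fun x => (f x).1 = b.1 ∧ (f x).2 = b.2).card := fun f => by
      rw [← Finset.filter_val, Finset.card_val]
      simp [Prod.ext_iff, eq_comm]
    exact (hcount fun u => (χ v u, χ u w)).trans (hb.trans (hcount fun u => (χ v' u, χ u w')).symm)
  have key : ∀ f : V → C × C, {u | P (f u).1 (f u).2}.ncard =
      ((Finset.univ.val.map f).filter fun b => P b.1 b.2).card := by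
    intro f
    rw [Multiset.filter_map, Multiset.card_map, Set.ncard_eq_toFinset_card', Set.toFinset_ofPred]
    rfl
  exact (key fun u => (χ v u, χ u w)).trans (hM ▸ (key fun u => (χ v' u, χ u w')).symm)

theorem adj_iff_of_color_eq (h2 : IsTwoStable G χ) {v w v' w' : V} (h : χ v w = χ v' w') :
    G.Adj v w ↔ G.Adj v' w' :=
  (h2 v w v' w' h).1.2.1

theorem ncard_and_eq_of_color_eq [Finite V] (h2 : IsTwoStable G χ) {Q₁ Q₂ : V → V → Prop}
    (hQ₁ : ∀ x y x' y', χ x y = χ x' y' → (Q₁ x y ↔ Q₁ x' y'))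
    (hQ₂ : ∀ x y x' y', χ x y = χ x' y' → (Q₂ x y ↔ Q₂ x' y')) {v w v' w' : V}
    (h : χ v w = χ v' w') : {u | Q₁ v u ∧ Q₂ u w}.ncard = {u | Q₁ v' u ∧ Q₂ u w'}.ncard := by
  let R (Q : V → V → Prop) (c : C) : Prop := ∃ x y, χ x y = c ∧ Q x y
  have hR : ∀ Q : V → V → Prop, (∀ x y x' y', χ x y = χ x' y' → (Q x y ↔ Q x' y')) →
      ∀ x y, Q x y ↔ R Q (χ x y) := fun Q hQ x y =>
    ⟨fun hxy => ⟨x, y, rfl, hxy⟩, fun ⟨x', y', hc, hxy'⟩ => (hQ x' y' x y hc).1 hxy'⟩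
  simp only [hR Q₁ hQ₁, hR Q₂ hQ₂]
  exact h2.ncard_eq_of_color_eq (fun c₁ c₂ => R Q₁ c₁ ∧ R Q₂ c₂) h

theorem ncard_commonNbrs_eq [Finite V] (h2 : IsTwoStable G χ) {v w v' w' : V}
    (h : χ v w = χ v' w') :
    {u | G.Adj v u ∧ G.Adj u w}.ncard = {u | G.Adj v' u ∧ G.Adj u w'}.ncard :=
  h2.ncard_and_eq_of_color_eq (fun _ _ _ _ => h2.adj_iff_of_color_eq)
    (fun _ _ _ _ => h2.adj_iff_of_color_eq) h

theorem ncard_color_adj_eq [Finite V] (h2 : IsTwoStable G χ) (c : C) {v w v' w' : V}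
    (h : χ v w = χ v' w') :
    {u | χ v u = c ∧ G.Adj u w}.ncard = {u | χ v' u = c ∧ G.Adj u w'}.ncard :=
  h2.ncard_and_eq_of_color_eq (Q₁ := fun x y => χ x y = c) (fun _ _ _ _ hc => by rw [hc])
    (fun _ _ _ _ => h2.adj_iff_of_color_eq) h

end IsTwoStable

namespace SimpleGraph

variable {V C : Type*} {G : SimpleGraph V} {V₁ V₂ : Set V}

def halfSquare (G : SimpleGraph V) (V₁ V₂ : Set V) : SimpleGraph V₁ :=
  fromRel fun p q => ∃ w ∈ V₂, G.Adj p w ∧ G.Adj q w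

def IsConstOnEdges (G : SimpleGraph V) (χ : V → V → C) (V₁ V₂ : Set V) : Prop :=
  ∀ v₁ v₂ v₁' v₂' : V, v₁ ∈ V₁ → v₂ ∈ V₂ → v₁' ∈ V₁ → v₂' ∈ V₂ →
    G.Adj v₁ v₂ → G.Adj v₁' v₂' → χ v₁ v₂ = χ v₁' v₂'

def colorGraph (χ : V → V → C) (V₁ : Set V) (c : C) : SimpleGraph V₁ :=
  fromRel fun p q => χ p q = c

theorem IsBipartiteWith.not_adj_of_mem_left (hB : G.IsBipartiteWith V₁ V₂) {x y : V}
    (hx : x ∈ V₁) (hy : y ∈ V₁) : ¬ G.Adj x y := fun hxy =>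
  Set.disjoint_left.1 hB.disjoint hy (hB.mem_of_mem_adj hx hxy)

theorem IsBipartiteWith.halfSquare_adj_iff (hB : G.IsBipartiteWith V₁ V₂) {x y : V₁} :
    (halfSquare G V₁ V₂).Adj x y ↔ x ≠ y ∧ ∃ u, G.Adj x u ∧ G.Adj u y := by
  refine ⟨fun ⟨hne, hxy⟩ => ⟨hne, ?_⟩, fun ⟨hne, u, hxu, huy⟩ => ⟨hne, ?_⟩⟩
  · rcases hxy with ⟨u, -, hxu, hyu⟩ | ⟨u, -, hyu, hxu⟩ <;> exact ⟨u, hxu, hyu.symm⟩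
  · exact .inl ⟨u, hB.mem_of_mem_adj x.2 hxu, hxu, huy.symm⟩

theorem IsBipartiteWith.preconnected_halfSquare (hB : G.IsBipartiteWith V₁ V₂)
    (hG : G.Preconnected) : (halfSquare G V₁ V₂).Preconnected := by
  have key : ∀ {a b : V} (p : G.Walk a b) (hb : b ∈ V₁),
      ∃ z : V₁, (z.1 = a ∨ G.Adj a z) ∧ (halfSquare G V₁ V₂).Reachable z ⟨b, hb⟩ := by
    intro a b p hb
    induction p with
    | nil => exact ⟨⟨_, hb⟩, .inl rfl, .rfl⟩
    | @cons a c b hac p ih =>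
      obtain ⟨z, hz, hzb⟩ := ih hb
      rcases hB.mem_of_adj hac with ⟨ha, hc⟩ | ⟨ha, hc⟩
      · have hcz : G.Adj c z :=
          hz.resolve_left fun h => Set.disjoint_left.1 hB.disjoint (h ▸ z.2) hc
        refine ⟨⟨a, ha⟩, .inl rfl, ?_⟩
        by_cases haz : (⟨a, ha⟩ : V₁) = z
        · exact haz ▸ hzb
        · exact (Adj.reachable ((fromRel_adj _ _ _).2 ⟨haz, .inl ⟨c, hc, hac, hcz.symm⟩⟩)).trans hzb
      · have hzc : z.1 = c := hz.resolve_right (hB.not_adj_of_mem_left hc z.2)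
        exact ⟨z, .inr (hzc ▸ hac), hzb⟩
  intro x y
  obtain ⟨z, hz, hzy⟩ := key (hG x y).some y.2
  obtain rfl : z = x := Subtype.ext (hz.resolve_right (hB.not_adj_of_mem_left x.2 z.2))
  exact hzy

variable [Finite V] {χ : V → V → C}

def colorPairsAt (G : SimpleGraph V) (χ : V → V → C) (V₁ : Set V) (c : C) (u : V) :
    Set (V₁ × V₁) :=
  {p | χ p.1 p.2 = c ∧ G.Adj p.1 u ∧ G.Adj p.2 u}

theorem ncard_colorPairsAt_eq_mul (hB : G.IsBipartiteWith V₁ V₂) (h2 : IsTwoStable G χ)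
    (hedge : IsConstOnEdges G χ V₁ V₂) (c : C) {u x : V} (hu : u ∈ V₂) (hxu : G.Adj x u) :
    (colorPairsAt G χ V₁ c u).ncard =
      {z | G.Adj z u}.ncard * {y | χ x y = c ∧ G.Adj y u}.ncard := by
  have hpre : colorPairsAt G χ V₁ c u = Prod.map Subtype.val Subtype.val ⁻¹'
      {p : V × V | p.1 ∈ {z | G.Adj z u} ∧ p.2 ∈ {y | χ p.1 y = c ∧ G.Adj y u}} := by
    ext p
    exact and_left_comm
  rw [hpre, Set.ncard_preimage_of_injective_subset_range]
  · refine Set.ncard_prod_eq_mul _ (fun x' => {y | χ x' y = c ∧ G.Adj y u})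
      fun x' hx'u => h2.ncard_color_adj_eq c ?_
    exact hedge x' u x u (hB.mem_of_mem_adj' hu hx'u) hu (hB.mem_of_mem_adj' hu hxu) hu hx'u hxu
  · exact fun p p' h => Prod.ext (Subtype.ext (congrArg Prod.fst h))
      (Subtype.ext (congrArg Prod.snd h))
  · rintro ⟨y, z⟩ ⟨hy, -, hz⟩
    exact ⟨(⟨y, hB.mem_of_mem_adj' hu hy⟩, ⟨z, hB.mem_of_mem_adj' hu hz⟩), rfl⟩

theorem ncard_colorPairsAt_eq (hB : G.IsBipartiteWith V₁ V₂) (h2 : IsTwoStable G χ)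
    (hedge : IsConstOnEdges G χ V₁ V₂) (c : C) {u u' x x' : V} (hu : u ∈ V₂) (hu' : u' ∈ V₂)
    (hxu : G.Adj x u) (hxu' : G.Adj x' u') :
    (colorPairsAt G χ V₁ c u).ncard = (colorPairsAt G χ V₁ c u').ncard := by
  have hxx' : χ x u = χ x' u' :=
    hedge x u x' u' (hB.mem_of_mem_adj' hu hxu) hu (hB.mem_of_mem_adj' hu' hxu') hu' hxu hxu'
  have hdeg : {z | G.Adj z u}.ncard = {z | G.Adj z u'}.ncard := by
    have := h2.ncard_commonNbrs_eq (h2 x u x' u' hxx').1.2.2.2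
    simpa only [adj_comm, and_self] using this
  rw [ncard_colorPairsAt_eq_mul hB h2 hedge c hu hxu,
    ncard_colorPairsAt_eq_mul hB h2 hedge c hu' hxu', hdeg, h2.ncard_color_adj_eq c hxx']

theorem ncard_edges_le_ncard_colorPairsAt (c : C) (u : V) :
    {e : (colorGraph χ V₁ c).edgeSet | ∀ x ∈ (e : Sym2 V₁), G.Adj x u}.ncard ≤
      (colorPairsAt G χ V₁ c u).ncard := by
  calc _ = (Subtype.val '' {e : (colorGraph χ V₁ c).edgeSet |
          ∀ x ∈ (e : Sym2 V₁), G.Adj x u}).ncard :=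
        (Set.ncard_image_of_injective _ Subtype.val_injective).symm
    _ ≤ ((fun p : V₁ × V₁ => s(p.1, p.2)) '' colorPairsAt G χ V₁ c u).ncard := by
        refine Set.ncard_le_ncard ?_
        rintro _ ⟨⟨e, he⟩, hadj, rfl⟩
        induction e with
        | h A B =>
        replace hadj : G.Adj A u ∧ G.Adj B u := Sym2.forall_mem_pair.1 hadj
        replace he : A ≠ B ∧ (χ A B = c ∨ χ B A = c) := (fromRel_adj _ _ _).1 ((mem_edgeSet _).1 he)
        rcases he.2 with hc | hc
        · exact ⟨(A, B), ⟨hc, hadj⟩, rfl⟩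
        · exact ⟨(B, A), ⟨hc, hadj.symm⟩, Sym2.eq_swap⟩
    _ ≤ _ := Set.ncard_image_le

theorem isTopSubgraph_colorGraph_of_ncard_le (hB : G.IsBipartiteWith V₁ V₂) {c : C} {m : ℕ}
    (hm : 0 < m) (hcn : ∀ x y, χ x y = c → m ≤ {u | G.Adj x u ∧ G.Adj u y}.ncard)
    (hload : ∀ u ∈ V₂, (colorPairsAt G χ V₁ c u).ncard ≤ m) :
    IsTopSubgraph (colorGraph χ V₁ c) G := by
  refine isTopSubgraph_of_ncard_commonNbrs Subtype.val_injective hm (fun ⟨e, he⟩ => ?_)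
    fun u => ?_
  · induction e with
    | h A B =>
    have hsub : ∀ x y : V₁, s(x, y) = s(A, B) → {u | G.Adj x u ∧ G.Adj u y} ⊆
        {u | u ∉ Set.range ((↑) : V₁ → V) ∧ ∀ z ∈ s(A, B), G.Adj z u} := by
      rintro x y hxy u ⟨hxu, huy⟩
      refine ⟨fun ⟨z, hz⟩ => hB.not_adj_of_mem_left x.2 z.2 (hz ▸ hxu), ?_⟩
      rw [← hxy, Sym2.forall_mem_pair]
      exact ⟨hxu, huy.symm⟩
    rcases ((fromRel_adj _ _ _).1 ((mem_edgeSet _).1 he)).2 with hc | hc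
    · exact (hcn A B hc).trans (Set.ncard_le_ncard (hsub A B rfl))
    · exact (hcn B A hc).trans (Set.ncard_le_ncard (hsub B A Sym2.eq_swap))
  · refine (Set.ncard_le_ncard fun e he => he.2).trans
      ((ncard_edges_le_ncard_colorPairsAt c u).trans ?_)
    by_cases hu : u ∈ V₂
    · exact hload u hu
    · have hempty : colorPairsAt G χ V₁ c u = ∅ :=
        Set.eq_empty_of_forall_notMem fun p hp => hu (hB.mem_of_mem_adj p.1.2 hp.2.1)
      simp [hempty]

theorem ncard_right_le_of_ncard_lt (hB : G.IsBipartiteWith V₁ V₂) {a : ℝ} (hdeg : DegSumConst a)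
    {h : ℕ} (hh : 1 ≤ h) (hexcl : ¬ HasTopK G h) {c : C} (hc : ∀ x y, χ x y = c → x ≠ y)
    {m k : ℕ} (hcn : ∀ x y, χ x y = c → {u | G.Adj x u ∧ G.Adj u y}.ncard ≤ m)
    (hk : ∀ u ∈ V₂, (colorPairsAt G χ V₁ c u).ncard = k) (hmk : m < k) :
    (V₂.ncard : ℝ) ≤ a * h ^ 2 * V₁.ncard := by
  have hload : ∀ p : V₁ × V₁, {u : V₂ | p ∈ colorPairsAt G χ V₁ c u}.ncard ≤ k := by
    intro p
    by_cases hp : χ p.1 p.2 = c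
    · refine le_trans ?_ ((hcn _ _ hp).trans hmk.le)
      rw [← Set.ncard_image_of_injective _ Subtype.val_injective]
      exact Set.ncard_le_ncard fun u ⟨u', hu', hu⟩ => hu ▸ ⟨hu'.2.1, hu'.2.2.symm⟩
    · simp [colorPairsAt, hp]
  obtain ⟨f, hf, hfu⟩ := exists_injective_of_ncard_le (ι := V₂)
    (fun u p => p ∈ colorPairsAt G χ V₁ c u) (by omega) (fun u => (hk u u.2).ge) hload
  simpa using hdeg.card_le_of_injective_pairs hh hexcl Subtype.val_injective
    Subtype.val_injective (fun u w h => Set.disjoint_left.1 hB.disjoint (h ▸ w.2) u.2) hf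
    (fun u h => hc _ _ (hfu u).1 (congrArg Subtype.val h)) fun u => (hfu u).2

theorem isTopSubgraph_colorGraph (hB : G.IsBipartiteWith V₁ V₂) (hG : G.Preconnected)
    (h2 : IsTwoStable G χ) (hedge : IsConstOnEdges G χ V₁ V₂)
    {a : ℝ} (hdeg : DegSumConst a) {h : ℕ} (hh : 1 ≤ h) (hexcl : ¬ HasTopK G h)
    (hsize : a * h ^ 2 * V₁.ncard < V₂.ncard) {v w u₀ : V} (hv : v ∈ V₁) (hvw : v ≠ w)
    (hvu₀ : G.Adj v u₀) (hwu₀ : G.Adj w u₀) :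
    IsTopSubgraph (colorGraph χ V₁ (χ v w)) G := by
  have hcn : ∀ x y, χ x y = χ v w →
      {u | G.Adj x u ∧ G.Adj u y}.ncard = {u | G.Adj v u ∧ G.Adj u w}.ncard :=
    fun x y hxy => h2.ncard_commonNbrs_eq hxy
  have hm : 0 < {u | G.Adj v u ∧ G.Adj u w}.ncard := (Set.ncard_pos).2 ⟨u₀, hvu₀, hwu₀.symm⟩
  have hu₀ : u₀ ∈ V₂ := hB.mem_of_mem_adj hv hvu₀
  have hnbr : ∀ u, ∃ x, G.Adj x u := fun u => by
    have := nontrivial_of_ne v w hvw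
    obtain ⟨t, ht⟩ := exists_ne u
    obtain ⟨x, hx⟩ := (hG u t).nonempty_neighborSet_left ht.symm
    exact ⟨x, hx.symm⟩
  have hk : ∀ u ∈ V₂, (colorPairsAt G χ V₁ (χ v w) u).ncard =
      (colorPairsAt G χ V₁ (χ v w) u₀).ncard := fun u hu =>
    ncard_colorPairsAt_eq hB h2 hedge _ hu hu₀ (hnbr u).choose_spec hvu₀
  rcases le_or_gt (colorPairsAt G χ V₁ (χ v w) u₀).ncard {u | G.Adj v u ∧ G.Adj u w}.ncard
    with hkm | hmk
  · exact isTopSubgraph_colorGraph_of_ncard_le hB hm (fun x y hxy => (hcn x y hxy).ge)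
      fun u hu => (hk u hu).trans_le hkm
  · refine absurd hsize (not_lt.2 (ncard_right_le_of_ncard_lt hB hdeg hh hexcl ?_
      (fun x y hxy => (hcn x y hxy).le) hk hmk))
    exact fun x y hxy hxy' => hvw ((h2 x y v w hxy).1.1.1 hxy')

theorem IsBipartiteWith.colorGraph_le_halfSquare (hB : G.IsBipartiteWith V₁ V₂)
    (h2 : IsTwoStable G χ) {v w : V₁} (hvw : (halfSquare G V₁ V₂).Adj v w) :
    colorGraph χ V₁ (χ v w) ≤ halfSquare G V₁ V₂ := by
  obtain ⟨-, u₀, hvu₀, hu₀w⟩ := hB.halfSquare_adj_iff.1 hvw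
  have hcn : ∀ x y : V, χ x y = χ v w → ∃ u, G.Adj x u ∧ G.Adj u y := fun x y hxy =>
    (Set.ncard_pos).1 ((h2.ncard_commonNbrs_eq hxy).symm ▸ (Set.ncard_pos).2 ⟨u₀, hvu₀, hu₀w⟩)
  rintro x y ⟨hne, hxy | hyx⟩
  · exact hB.halfSquare_adj_iff.2 ⟨hne, hcn x y hxy⟩
  · obtain ⟨u, hyu, hux⟩ := hcn y x hyx
    exact hB.halfSquare_adj_iff.2 ⟨hne, u, hux.symm, hyu.symm⟩

end SimpleGraph

theorem stmt_10_general {V C : Type*} [Fintype V]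
    (a : ℝ) (hdeg : DegSumConst a)
    (h : ℕ) (hh : 1 ≤ h)
    (G : SimpleGraph V) (hconn : G.Connected) (hexcl : ¬ HasTopK G h)
    (V₁ V₂ : Set V) (hdisj : Disjoint V₁ V₂)
    (hbip : ∀ x y : V, G.Adj x y → (x ∈ V₁ ∧ y ∈ V₂) ∨ (x ∈ V₂ ∧ y ∈ V₁))
    (χ : V → V → C) (h2 : IsTwoStable G χ)
    (hedge : ∀ v₁ v₂ v₁' v₂' : V, v₁ ∈ V₁ → v₂ ∈ V₂ → v₁' ∈ V₁ → v₂' ∈ V₂ →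
      G.Adj v₁ v₂ → G.Adj v₁' v₂' → χ v₁ v₂ = χ v₁' v₂')
    (hsize : a * (h : ℝ) ^ 2 * (V₁.ncard : ℝ) < (V₂.ncard : ℝ)) :
    ∃ (r : ℕ) (c : Fin r → C),
      (∀ i : Fin r, ∃ x ∈ V₁, ∃ y ∈ V₁, χ x y = c i) ∧
      (∀ x y : ↥V₁,
        (SimpleGraph.fromRel
          (fun p q : ↥V₁ => ∃ w ∈ V₂, G.Adj p.1 w ∧ G.Adj q.1 w)).Adj x y ↔
        ∃ i : Fin r, (SimpleGraph.fromRel (fun p q : ↥V₁ => χ p.1 q.1 = c i)).Adj x y) ∧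
      (SimpleGraph.fromRel
        (fun p q : ↥V₁ => ∃ w ∈ V₂, G.Adj p.1 w ∧ G.Adj q.1 w)).Preconnected ∧
      (∀ i : Fin r,
        IsTopSubgraph (SimpleGraph.fromRel (fun p q : ↥V₁ => χ p.1 q.1 = c i)) G) := by
  classical
  have hB : G.IsBipartiteWith V₁ V₂ := ⟨hdisj, fun x y hxy => hbip x y hxy⟩
  let cs : Finset C := ({p : V₁ × V₁ | (halfSquare G V₁ V₂).Adj p.1 p.2} : Finset _).image
    fun p => χ p.1 p.2
  have hcs : ∀ i, ∃ v w : V₁, (halfSquare G V₁ V₂).Adj v w ∧ χ v w = cs.equivFin.symm i :=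
    fun i => by
      obtain ⟨p, hp, hpc⟩ := Finset.mem_image.1 (cs.equivFin.symm i).2
      exact ⟨p.1, p.2, (Finset.mem_filter.1 hp).2, hpc⟩
  refine ⟨cs.card, fun i => cs.equivFin.symm i, fun i => ?_,
    fun x y => ⟨fun hxy => ?_, fun ⟨i, hxy⟩ => ?_⟩,
    hB.preconnected_halfSquare hconn.preconnected, fun i => ?_⟩
  · obtain ⟨v, w, -, hc⟩ := hcs i
    exact ⟨v, v.2, w, w.2, hc⟩
  · have hmem : χ x y ∈ cs :=
      Finset.mem_image.2 ⟨(x, y), Finset.mem_filter.2 ⟨Finset.mem_univ _, hxy⟩, rfl⟩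
    exact ⟨cs.equivFin ⟨_, hmem⟩, (fromRel_adj _ _ _).2 ⟨hxy.ne, .inl (by simp)⟩⟩
  · obtain ⟨v, w, hvw, hc⟩ := hcs i
    exact hB.colorGraph_le_halfSquare h2 hvw (hc ▸ hxy)
  · obtain ⟨v, w, hvw, hc⟩ := hcs i
    obtain ⟨hne, u₀, hvu₀, hu₀w⟩ := hB.halfSquare_adj_iff.1 hvw
    show IsTopSubgraph (colorGraph χ V₁ (cs.equivFin.symm i)) G
    rw [← hc]
    exact isTopSubgraph_colorGraph hB hconn.preconnected h2 hedge hdeg hh hexcl hsize v.2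
      (Subtype.coe_ne_coe.2 hne) hvu₀ hu₀w.symm

/-- Let `G` be a finite connected bipartite simple graph with bipartition
`(V₁,V₂)` that excludes `K_h` as a topological subgraph, and let `χ` be a 2-stable
pair-coloring that is constant on the edges from `V₁` to `V₂`. Assume `|V₂| > a·h²·|V₁|`.
Let `E*` be the set of pairs of distinct vertices of `V₁` with a common neighbor in `V₂`.
Then there are colors `c₁,…,c_r` attained on `V₁ × V₁` such that: (1) `E*` is the union of
the `E_{c_i}`; (2) the graph `H = (V₁, E*)` is connected; and (3) each `H_i = (V₁, E_{c_i})`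
is a topological subgraph of `G`. -/
theorem stmt_10 {V C : Type*} [Fintype V]
    (a : ℝ) (ha : 2 ≤ a) (hdeg : DegSumConst a)
    (h : ℕ) (hh : 1 ≤ h)
    (G : SimpleGraph V) (hconn : G.Connected) (hexcl : ¬ HasTopK G h)
    (V₁ V₂ : Set V) (hcover : V₁ ∪ V₂ = Set.univ) (hdisj : Disjoint V₁ V₂)
    (hbip : ∀ x y : V, G.Adj x y → (x ∈ V₁ ∧ y ∈ V₂) ∨ (x ∈ V₂ ∧ y ∈ V₁))
    (χ : V → V → C) (h2 : IsTwoStable G χ)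
    (hedge : ∀ v₁ v₂ v₁' v₂' : V, v₁ ∈ V₁ → v₂ ∈ V₂ → v₁' ∈ V₁ → v₂' ∈ V₂ →
      G.Adj v₁ v₂ → G.Adj v₁' v₂' → χ v₁ v₂ = χ v₁' v₂')
    (hsize : a * (h : ℝ) ^ 2 * (V₁.ncard : ℝ) < (V₂.ncard : ℝ)) :
    ∃ (r : ℕ) (c : Fin r → C),
      (∀ i : Fin r, ∃ x ∈ V₁, ∃ y ∈ V₁, χ x y = c i) ∧
      (∀ x y : ↥V₁,
        (SimpleGraph.fromRel
          (fun p q : ↥V₁ => ∃ w ∈ V₂, G.Adj p.1 w ∧ G.Adj q.1 w)).Adj x y ↔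
        ∃ i : Fin r, (SimpleGraph.fromRel (fun p q : ↥V₁ => χ p.1 q.1 = c i)).Adj x y) ∧
      (SimpleGraph.fromRel
        (fun p q : ↥V₁ => ∃ w ∈ V₂, G.Adj p.1 w ∧ G.Adj q.1 w)).Preconnected ∧
      (∀ i : Fin r,
        IsTopSubgraph (SimpleGraph.fromRel (fun p q : ↥V₁ => χ p.1 q.1 = c i)) G) :=
  stmt_10_general a hdeg h hh G hconn hexcl V₁ V₂ hdisj hbip χ h2 hedge hsize
end
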